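/- arXiv:0802.2356 — 7 statements merged into one kernel-verified Lean document; each statement's English description precedes it below -/
import Mathlib

section
/- If φ(t) = exp(-α(t)) is an increasing differentiable weight function on (0, t₀) with φ(0)=0 satisfying the doubling condition φ(2t) ≤ β·φ(t), and its inverse u = φ⁻¹ satisfies log(1/u(t²)) ≤ β·log(1/u(t)) for all small t > 0 (with some constant β > 1), then log log(1/r) = o(α(r)) as r → 0. -/
/-!
Write `L t = log (1 / u t)`. Iterating `L (t²) ≤ β L t` from a base interval `[s₀², s₀]` on which
`L ≤ M` gives `L ≤ βⁿ M` on `[s₀ ^ 2 ^ (n + 1), s₀]`, that is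
`L t ≤ M (log t / log s₀) ^ log₂ β`. This polylogarithmic growth is below `t ^ (-ε)` for every
`ε > 0`, and at `t = φ r` it reads `log (1 / r) ≤ φ r ^ (-ε)`, i.e.
`log log (1 / r) ≤ ε log (1 / φ r)`.
-/

open Filter Set Real Topology Asymptotics

section SquaringRecursion

variable {L : ℝ → ℝ} {β M s₀ : ℝ}

lemma le_pow_mul_of_le_mul_sq (hβ : 1 ≤ β) (hM : 0 ≤ M) (hs₀ : 0 < s₀) (hs₀1 : s₀ ≤ 1)
    (hsq : ∀ t ∈ Ioc 0 s₀, L (t ^ 2) ≤ β * L t) (hbase : ∀ t ∈ Icc (s₀ ^ 2) s₀, L t ≤ M)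
    (n : ℕ) : ∀ t ∈ Icc (s₀ ^ 2 ^ (n + 1)) s₀, L t ≤ β ^ n * M := by
  induction n with
  | zero => simpa using hbase
  | succ n ih =>
    rintro t ⟨hlo, hhi⟩
    have hβM : β ^ n * M ≤ β ^ (n + 1) * M :=
      mul_le_mul_of_nonneg_right (pow_le_pow_right₀ hβ n.le_succ) hM
    rcases le_or_gt (s₀ ^ 2 ^ (n + 1)) t with hmid | hmid
    · exact (ih t ⟨hmid, hhi⟩).trans hβM
    have ht : 0 ≤ t := (pow_pos hs₀ _).le.trans hlo
    have hpow : 0 ≤ s₀ ^ 2 ^ (n + 1) := by positivity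
    have hroot_lo : s₀ ^ 2 ^ (n + 1) ≤ √t := by
      rw [Real.le_sqrt hpow ht, ← pow_mul, ← pow_succ]; exact hlo
    have hroot_hi : √t ≤ s₀ := by
      rw [Real.sqrt_le_left hs₀.le]
      calc t ≤ s₀ ^ 2 ^ (n + 1) := hmid.le
        _ ≤ s₀ ^ 2 := pow_le_pow_of_le_one hs₀.le hs₀1 (Nat.le_self_pow n.succ_ne_zero 2)
    calc L t = L (√t ^ 2) := by rw [Real.sq_sqrt ht]
      _ ≤ β * L √t := hsq _ ⟨(pow_pos hs₀ _).trans_le hroot_lo, hroot_hi⟩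
      _ ≤ β * (β ^ n * M) := by gcongr; exact ih _ ⟨hroot_lo, hroot_hi⟩
      _ = β ^ (n + 1) * M := by ring

lemma le_mul_log_div_log_rpow (hβ : 1 ≤ β) (hM : 0 ≤ M) (hs₀ : 0 < s₀) (hs₀1 : s₀ < 1)
    (hsq : ∀ t ∈ Ioc 0 s₀, L (t ^ 2) ≤ β * L t) (hbase : ∀ t ∈ Icc (s₀ ^ 2) s₀, L t ≤ M)
    {t : ℝ} (ht : t ∈ Ioc 0 s₀) : L t ≤ M * (log t / log s₀) ^ logb 2 β := by
  have hlogs₀ : log s₀ < 0 := log_neg hs₀ hs₀1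
  have hratio : 1 ≤ log t / log s₀ := by
    rw [one_le_div_of_neg hlogs₀]; exact log_le_log ht.1 ht.2
  obtain ⟨n, hn_le, hn_lt⟩ := exists_nat_pow_near hratio one_lt_two
  have ht_lo : s₀ ^ 2 ^ (n + 1) ≤ t := by
    rw [← log_le_log_iff (by positivity) ht.1, log_pow]
    push_cast
    rw [div_lt_iff_of_neg hlogs₀] at hn_lt
    exact hn_lt.le
  have hβpow : β ^ n = ((2 : ℝ) ^ n) ^ logb 2 β := by
    rw [← rpow_natCast_mul zero_le_two, mul_comm, rpow_mul zero_le_two,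
      rpow_logb two_pos (by norm_num) (by linarith), rpow_natCast]
  calc L t ≤ β ^ n * M :=
        le_pow_mul_of_le_mul_sq hβ hM hs₀ hs₀1.le hsq hbase n t ⟨ht_lo, ht.2⟩
    _ ≤ (log t / log s₀) ^ logb 2 β * M := by
        rw [hβpow]
        exact mul_le_mul_of_nonneg_right
          (rpow_le_rpow (by positivity) hn_le (logb_nonneg one_lt_two hβ)) hM
    _ = M * (log t / log s₀) ^ logb 2 β := mul_comm _ _

lemma eventually_le_rpow_neg (hβ : 1 ≤ β) (hM : 0 ≤ M) (hs₀ : 0 < s₀) (hs₀1 : s₀ < 1)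
    (hsq : ∀ t ∈ Ioc 0 s₀, L (t ^ 2) ≤ β * L t) (hbase : ∀ t ∈ Icc (s₀ ^ 2) s₀, L t ≤ M)
    {ε : ℝ} (hε : 0 < ε) : ∀ᶠ t in 𝓝[>] 0, L t ≤ t ^ (-ε) := by
  have hsmall := ((isLittleO_abs_log_rpow_rpow_nhdsGT_zero (logb 2 β)
    (neg_lt_zero.2 hε)).const_mul_left (M / |log s₀| ^ logb 2 β)).bound one_pos
  filter_upwards [hsmall, Ioc_mem_nhdsGT hs₀] with t hbound ht
  have hratio : log t / log s₀ = |log t| / |log s₀| := by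
    rw [← abs_div, abs_of_nonneg]
    exact div_nonneg_of_nonpos (log_nonpos ht.1.le (ht.2.trans hs₀1.le))
      (log_nonpos hs₀.le hs₀1.le)
  calc L t ≤ M * (log t / log s₀) ^ logb 2 β :=
        le_mul_log_div_log_rpow hβ hM hs₀ hs₀1 hsq hbase ht
    _ = M / |log s₀| ^ logb 2 β * |log t| ^ logb 2 β := by
        rw [hratio, div_rpow (abs_nonneg _) (abs_nonneg _)]; ring
    _ ≤ t ^ (-ε) := by
        rw [one_mul, norm_of_nonneg (rpow_pos_of_pos ht.1 _).le] at hbound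
        exact (le_abs_self _).trans hbound

end SquaringRecursion

lemma StrictMonoOn.le_of_apply_le_Ioo {α γ : Type*} [LinearOrder α] [Preorder γ] {f : α → γ}
    {a b x y : α} (hf : StrictMonoOn f (Ioo a b)) (hy : y ∈ Ioo a b) (hx : a < x)
    (hfxy : f y ≤ f x) : y ≤ x := by
  by_contra! hxy
  exact (hf ⟨hx, hxy.trans hy.2⟩ hy hxy).not_ge hfxy

lemma isLittleO_log_log_inv_of_le_rpow_neg {φ : ℝ → ℝ} (hφ : Tendsto φ (𝓝[>] 0) (𝓝[>] 0))
    (h : ∀ ε : ℝ, 0 < ε → ∀ᶠ r in 𝓝[>] 0, log (1 / r) ≤ φ r ^ (-ε)) :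
    (fun r => log (log (1 / r))) =o[𝓝[>] 0] (fun r => log (1 / φ r)) := by
  refine isLittleO_iff.2 fun ε hε => ?_
  filter_upwards [h ε hε, hφ.eventually (Ioo_mem_nhdsGT one_pos),
    Ioo_mem_nhdsGT (exp_pos (-1))] with r hr hφr hre
  have hr1 : 1 ≤ log (1 / r) := by
    rw [one_div, log_inv, le_neg, ← log_exp (-1)]
    exact log_le_log hre.1 hre.2.le
  rw [norm_of_nonneg (log_nonneg hr1),
    norm_of_nonneg (log_nonneg (one_le_one_div hφr.1 hφr.2.le))]
  calc log (log (1 / r)) ≤ log (φ r ^ (-ε)) := log_le_log (by linarith) hr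
    _ = ε * log (1 / φ r) := by rw [log_rpow hφr.1, one_div, log_inv]; ring

theorem stmt0_general
    (t₀ β : ℝ) (ht₀ : 0 < t₀) (hβ : 1 < β)
    (φ u : ℝ → ℝ)
    (hpos : ∀ t ∈ Ioo 0 t₀, 0 < φ t)
    (hmono : StrictMonoOn φ (Ioo 0 t₀))
    (hlim : Tendsto φ (nhdsWithin 0 (Ioi 0)) (nhds 0))
    (huinv : ∀ᶠ t in nhdsWithin 0 (Ioi 0), u (φ t) = t ∧ φ (u t) = t ∧ 0 < u t)
    (hu : ∀ᶠ t in nhdsWithin 0 (Ioi 0),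
      Real.log (1 / u (t ^ 2)) ≤ β * Real.log (1 / u t)) :
    (fun r => Real.log (Real.log (1 / r)))
      =o[nhdsWithin 0 (Ioi 0)] (fun r => Real.log (1 / φ r)) := by
  obtain ⟨δ, hδ : 0 < δ, hδu⟩ := mem_nhdsGT_iff_exists_Ioc_subset.mp (huinv.and hu)
  obtain ⟨ρ, hφρ, hρ0, hρ⟩ :=
    ((hlim.eventually (gt_mem_nhds (by positivity : 0 < min δ 1 ^ 2))).and
      (Ioo_mem_nhdsGT (lt_min ht₀ one_pos))).exists
  obtain ⟨hρt₀, hρ1⟩ := lt_min_iff.1 hρ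
  have hφρ0 : 0 < φ ρ := hpos ρ ⟨hρ0, hρt₀⟩
  -- On the base interval `[s₀², s₀] = [φ ρ, √(φ ρ)]` the monotonicity of `φ` gives `u ≥ ρ`.
  set s₀ := √(φ ρ)
  obtain ⟨hs₀δ, hs₀1⟩ := lt_min_iff.1 ((Real.sqrt_lt' (by positivity)).2 hφρ)
  have hs₀sq : s₀ ^ 2 = φ ρ := Real.sq_sqrt hφρ0.le
  have hbase : ∀ s ∈ Icc (s₀ ^ 2) s₀, log (1 / u s) ≤ log (1 / ρ) := by
    rintro s ⟨hs_lo, hs_hi⟩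
    obtain ⟨⟨-, hφu, hu0⟩, -⟩ := hδu ⟨(hs₀sq ▸ hφρ0).trans_le hs_lo, hs_hi.trans hs₀δ.le⟩
    have hρu : ρ ≤ u s := hmono.le_of_apply_le_Ioo ⟨hρ0, hρt₀⟩ hu0
      (by rw [hφu, ← hs₀sq]; exact hs_lo)
    gcongr
  have hL : ∀ ε : ℝ, 0 < ε → ∀ᶠ t in 𝓝[>] 0, log (1 / u t) ≤ t ^ (-ε) := fun ε hε =>
    eventually_le_rpow_neg (L := fun s => log (1 / u s)) hβ.le
      (log_nonneg (one_le_one_div hρ0 hρ1.le)) (Real.sqrt_pos.2 hφρ0) hs₀1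
      (fun t ht => (hδu ⟨ht.1, ht.2.trans hs₀δ.le⟩).2) hbase hε
  have hφ : Tendsto φ (𝓝[>] 0) (𝓝[>] 0) := tendsto_nhdsWithin_iff.2
    ⟨hlim, by filter_upwards [Ioo_mem_nhdsGT ht₀] with t ht using hpos t ht⟩
  refine isLittleO_log_log_inv_of_le_rpow_neg hφ fun ε hε => ?_
  filter_upwards [hφ.eventually (hL ε hε), huinv] with r hr hur
  rwa [hur.1] at hr

/-- If `φ(t) = exp(-α(t))` is an increasing differentiable weight
function on `(0, t₀)` with `φ(0⁺) = 0` satisfying the doubling condition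
`φ(2t) ≤ β φ(t)`, and its inverse `u = φ⁻¹` satisfies
`log(1/u(t²)) ≤ β log(1/u(t))` for all small `t > 0` (with `β > 1`), then
`log log (1/r) = o(α(r))` as `r → 0⁺`, where `α(t) = log(1/φ(t))`. -/
theorem stmt0
    (t₀ β : ℝ) (ht₀ : 0 < t₀) (hβ : 1 < β)
    (φ u : ℝ → ℝ)
    (hpos : ∀ t ∈ Ioo 0 t₀, 0 < φ t)
    (hmono : StrictMonoOn φ (Ioo 0 t₀))
    (hdiff : ∀ t ∈ Ioo 0 t₀, DifferentiableAt ℝ φ t)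
    (hlim : Tendsto φ (nhdsWithin 0 (Ioi 0)) (nhds 0))
    (hdoub : ∀ᶠ t in nhdsWithin 0 (Ioi 0), φ (2 * t) ≤ β * φ t)
    (huinv : ∀ᶠ t in nhdsWithin 0 (Ioi 0), u (φ t) = t ∧ φ (u t) = t ∧ 0 < u t)
    (hu : ∀ᶠ t in nhdsWithin 0 (Ioi 0),
      Real.log (1 / u (t ^ 2)) ≤ β * Real.log (1 / u t)) :
    (fun r => Real.log (Real.log (1 / r)))
      =o[nhdsWithin 0 (Ioi 0)] (fun r => Real.log (1 / φ r)) :=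
  stmt0_general t₀ β ht₀ hβ φ u hpos hmono hlim huinv hu
end

section
/- Let s ≥ 1, c > 0, and φ(t) = exp(-(c·log(1/t))^{1/s}) for small t > 0, with inverse u = φ⁻¹. Then the integral ∫₀ (u(t)/u'(t))^{n-1} dt/t^n diverges if and only if s ≤ n/(n-1). -/
open Filter Set Real Topology

/-!
Solving `φ (u t) = t` gives `u t = exp (-(-log t) ^ s / c)`, hence
`u / u' = c t / (s (-log t) ^ (s - 1))` and the integrand is `(c / s) ^ (n - 1) / (t (-log t) ^ p)`
with `p = (s - 1)(n - 1)`. This Bertrand integral diverges at `0` exactly when `p ≤ 1`, as the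
primitives `(-log t) ^ (1 - p) / (p - 1)` (for `p ≠ 1`) and `-log (-log t)` (for `p = 1`) show,
and `p ≤ 1` is equivalent to `s ≤ n / (n - 1)`.
-/

lemma tendsto_intervalIntegral_atTop_iff_of_hasDerivAt {f F : ℝ → ℝ} {b : ℝ} (hb : 0 < b)
    (hF : ∀ t ∈ Ioc 0 b, HasDerivAt F (f t) t) (hf : ContinuousOn f (Ioc 0 b)) :
    Tendsto (fun ε => ∫ t in ε..b, f t) (𝓝[>] 0) atTop ↔ Tendsto F (𝓝[>] 0) atBot := by
  have hFTC : ∀ ε ∈ Ioc 0 b, ∫ t in ε..b, f t = F b - F ε := fun ε hε => by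
    have hsub : Icc ε b ⊆ Ioc 0 b := Icc_subset_Ioc hε.1 le_rfl
    refine intervalIntegral.integral_eq_sub_of_hasDerivAt (fun t ht => hF t ?_)
      ((hf.mono hsub).intervalIntegrable_of_Icc hε.2)
    exact hsub (uIcc_of_le hε.2 ▸ ht)
  have hev : (fun ε => ∫ t in ε..b, f t) =ᶠ[𝓝[>] 0] fun ε => F b + -F ε :=
    eventually_of_mem (Ioc_mem_nhdsGT hb) fun ε hε => (hFTC ε hε).trans (sub_eq_add_neg _ _)
  rw [tendsto_congr' hev, ← tendsto_neg_atTop_iff]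
  refine ⟨fun h => ?_, tendsto_atTop_add_const_left _ _⟩
  simpa using tendsto_atTop_add_const_left _ (-F b) h

lemma hasDerivAt_neg_log_rpow_div {p t : ℝ} (hp : p ≠ 1) (ht0 : 0 < t) (ht1 : t < 1) :
    HasDerivAt (fun x => (-log x) ^ (1 - p) / (p - 1)) (t * (-log t) ^ p)⁻¹ t := by
  have hL : 0 < -log t := neg_pos.2 (log_neg ht0 ht1)
  refine ((((hasDerivAt_log ht0.ne').neg).rpow_const (p := 1 - p) (Or.inl hL.ne')).div_const
    (p - 1)).congr_deriv ?_
  rw [Pi.neg_apply, show 1 - p - 1 = -p by ring, rpow_neg hL.le]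
  field_simp [sub_ne_zero.2 hp]
  ring

lemma hasDerivAt_neg_log_neg_log {t : ℝ} (ht0 : 0 < t) (ht1 : t < 1) :
    HasDerivAt (fun x => -log (-log x)) (t * (-log t) ^ (1 : ℝ))⁻¹ t := by
  have hL : 0 < -log t := neg_pos.2 (log_neg ht0 ht1)
  refine (((hasDerivAt_log ht0.ne').neg).log hL.ne').neg.congr_deriv ?_
  rw [rpow_one, Pi.neg_apply]
  field_simp

lemma continuousOn_inv_mul_neg_log_rpow (p : ℝ) {b : ℝ} (hb : b < 1) :
    ContinuousOn (fun t => (t * (-log t) ^ p)⁻¹) (Ioc 0 b) := by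
  have hL : ∀ t ∈ Ioc (0 : ℝ) b, 0 < -log t := fun t ht =>
    neg_pos.2 (log_neg ht.1 (ht.2.trans_lt hb))
  refine ContinuousOn.inv₀ ?_ fun t ht => (mul_pos ht.1 (rpow_pos_of_pos (hL t ht) p)).ne'
  exact continuousOn_id.mul ((continuousOn_log.mono fun t ht => ht.1.ne').neg.rpow_const
    fun t ht => Or.inl (hL t ht).ne')

theorem tendsto_integral_inv_mul_neg_log_rpow_atTop_iff {p b : ℝ} (hb0 : 0 < b) (hb1 : b < 1) :
    Tendsto (fun ε => ∫ t in ε..b, (t * (-log t) ^ p)⁻¹) (𝓝[>] 0) atTop ↔ p ≤ 1 := by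
  have hlog : Tendsto (fun t => -log t) (𝓝[>] 0) atTop :=
    tendsto_neg_atBot_atTop.comp tendsto_log_nhdsGT_zero
  have hcont := continuousOn_inv_mul_neg_log_rpow p hb1
  rcases eq_or_ne p 1 with rfl | hp
  · rw [tendsto_intervalIntegral_atTop_iff_of_hasDerivAt hb0
      (fun t ht => hasDerivAt_neg_log_neg_log ht.1 (ht.2.trans_lt hb1)) hcont]
    exact iff_of_true (tendsto_neg_atTop_atBot.comp (tendsto_log_atTop.comp hlog)) le_rfl
  rw [tendsto_intervalIntegral_atTop_iff_of_hasDerivAt hb0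
    (fun t ht => hasDerivAt_neg_log_rpow_div hp ht.1 (ht.2.trans_lt hb1)) hcont]
  rcases hp.lt_or_gt with hp | hp
  · exact iff_of_true (((tendsto_rpow_atTop (by linarith)).comp hlog).atTop_div_const_of_neg
      (by linarith)) hp.le
  · refine iff_of_false (not_tendsto_atBot_of_tendsto_nhds (a := 0) ?_) (not_le.2 hp)
    have h0 := (tendsto_rpow_neg_atTop (y := p - 1) (by linarith)).comp hlog
    simpa [neg_sub] using h0.div_const (p - 1)

lemma eq_exp_neg_neg_log_rpow_div_of_exp_eq {s c x t : ℝ} (hs : 0 < s) (hc : 0 < c)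
    (hx0 : 0 < x) (hx1 : x ≤ 1) (h : exp (-(c * log (1 / x)) ^ (1 / s)) = t) :
    x = exp (-((-log t) ^ s / c)) := by
  have hA : 0 ≤ c * log (1 / x) := mul_nonneg hc.le (log_nonneg (one_le_one_div hx0 hx1))
  rw [← h, log_exp, neg_neg, ← rpow_mul hA, one_div_mul_cancel hs.ne', rpow_one, one_div,
    log_inv, mul_div_cancel_left₀ _ hc.ne', neg_neg, exp_log hx0]

lemma hasDerivAt_exp_neg_neg_log_rpow_div (s c : ℝ) {t : ℝ} (ht0 : 0 < t) (ht1 : t < 1) :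
    HasDerivAt (fun x => exp (-((-log x) ^ s / c)))
      (exp (-((-log t) ^ s / c)) * (s * (-log t) ^ (s - 1) / (c * t))) t := by
  have hL : 0 < -log t := neg_pos.2 (log_neg ht0 ht1)
  refine ((((hasDerivAt_log ht0.ne').neg.rpow_const (p := s) (Or.inl hL.ne')).div_const
    c).neg.exp).congr_deriv ?_
  simp only [Pi.neg_apply]
  field_simp

lemma div_deriv_pow_div_pow_succ_eq {s c t : ℝ} {u : ℝ → ℝ} (hs : 0 < s) (hc : 0 < c)
    (ht0 : 0 < t) (ht1 : t < 1) (hu : u =ᶠ[𝓝 t] fun x => exp (-((-log x) ^ s / c))) (m : ℕ) :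
    (u t / deriv u t) ^ m / t ^ (m + 1) = (c / s) ^ m * (t * (-log t) ^ ((s - 1) * m))⁻¹ := by
  have hL : 0 < -log t := neg_pos.2 (log_neg ht0 ht1)
  have hratio : u t / deriv u t = c * t / (s * (-log t) ^ (s - 1)) := by
    rw [hu.deriv_eq, (hasDerivAt_exp_neg_neg_log_rpow_div s c ht0 ht1).deriv, hu.eq_of_nhds]
    field_simp
  have hLs : (-log t) ^ (s - 1) ≠ 0 := (rpow_pos_of_pos hL _).ne'
  rw [hratio, rpow_mul hL.le, rpow_natCast, pow_succ, div_pow, div_pow, mul_pow, mul_pow]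
  field_simp

lemma sub_one_mul_sub_one_le_one_iff {s a : ℝ} (ha : 1 < a) :
    (s - 1) * (a - 1) ≤ 1 ↔ s ≤ a / (a - 1) := by
  rw [le_div_iff₀ (by linarith)]
  constructor <;> intro h <;> linarith

theorem stmt2_general
    (n : ℕ) (hn : 2 ≤ n) (s c : ℝ) (hs : 1 ≤ s) (hc : 0 < c)
    (r₀ : ℝ) (hr₀ : 0 < r₀) (hr₀1 : r₀ < 1)
    (u : ℝ → ℝ)
    (hu_pos : ∀ t ∈ Ioo (0:ℝ) 1, 0 < u t ∧ u t < 1)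
    (hu_inv : ∀ t ∈ Ioo (0:ℝ) 1,
      Real.exp (-(c * Real.log (1 / u t)) ^ (1 / s)) = t) :
    Tendsto (fun ε => ∫ t in ε..r₀, (u t / deriv u t) ^ (n - 1) / t ^ n)
        (nhdsWithin 0 (Ioi 0)) atTop
      ↔ s ≤ (n : ℝ) / (n - 1) := by
  have hs0 : 0 < s := one_pos.trans_le hs
  have hu : ∀ t ∈ Ioo (0:ℝ) 1, u t = exp (-((-log t) ^ s / c)) := fun t ht =>
    eq_exp_neg_neg_log_rpow_div_of_exp_eq hs0 hc (hu_pos t ht).1 (hu_pos t ht).2.le (hu_inv t ht)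
  have hintegrand : ∀ t ∈ Ioo (0:ℝ) 1, (u t / deriv u t) ^ (n - 1) / t ^ n
      = (c / s) ^ (n - 1) * (t * (-log t) ^ ((s - 1) * (n - 1 : ℕ)))⁻¹ := fun t ht => by
    rw [← div_deriv_pow_div_pow_succ_eq hs0 hc ht.1 ht.2
      (eventually_of_mem (Ioo_mem_nhds ht.1 ht.2) hu), Nat.sub_add_cancel (by omega)]
  have hintegral : (fun ε => ∫ t in ε..r₀, (u t / deriv u t) ^ (n - 1) / t ^ n)
      =ᶠ[𝓝[>] 0] fun ε => (c / s) ^ (n - 1) *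
        ∫ t in ε..r₀, (t * (-log t) ^ ((s - 1) * (n - 1 : ℕ)))⁻¹ := by
    filter_upwards [Ioo_mem_nhdsGT hr₀] with ε hε
    rw [← intervalIntegral.integral_const_mul]
    refine intervalIntegral.integral_congr fun t ht => hintegrand t ?_
    rw [uIcc_of_le hε.2.le] at ht
    exact ⟨hε.1.trans_le ht.1, ht.2.trans_lt hr₀1⟩
  rw [tendsto_congr' hintegral, tendsto_const_mul_atTop_of_pos (by positivity),
    tendsto_integral_inv_mul_neg_log_rpow_atTop_iff hr₀ hr₀1, Nat.cast_sub (by omega),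
    Nat.cast_one, sub_one_mul_sub_one_le_one_iff (by exact_mod_cast hn)]

/-- Let `s ≥ 1`, `c > 0`, `n ≥ 2`, and
`φ(t) = exp(-(c log(1/t))^{1/s})` for small `t > 0`, with inverse `u = φ⁻¹`
(differentiable). Then `∫₀^{r₀} (u(t)/u'(t))^{n-1} dt/t^n` diverges if and only
if `s ≤ n/(n-1)`. -/
theorem stmt2
    (n : ℕ) (hn : 2 ≤ n) (s c : ℝ) (hs : 1 ≤ s) (hc : 0 < c)
    (r₀ : ℝ) (hr₀ : 0 < r₀) (hr₀1 : r₀ < 1)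
    (u : ℝ → ℝ)
    (hu_pos : ∀ t ∈ Ioo (0:ℝ) 1, 0 < u t ∧ u t < 1)
    (hu_inv : ∀ t ∈ Ioo (0:ℝ) 1,
      Real.exp (-(c * Real.log (1 / u t)) ^ (1 / s)) = t)
    (hu_diff : ∀ t ∈ Ioo (0:ℝ) 1, DifferentiableAt ℝ u t)
    (hu_deriv_pos : ∀ t ∈ Ioo (0:ℝ) 1, 0 < deriv u t) :
    Tendsto (fun ε => ∫ t in ε..r₀, (u t / deriv u t) ^ (n - 1) / t ^ n)
        (nhdsWithin 0 (Ioi 0)) atTop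
      ↔ s ≤ (n : ℝ) / (n - 1) :=
  stmt2_general n hn s c hs hc r₀ hr₀ hr₀1 u hu_pos hu_inv
end

section
/- For n ≥ 2, s = n/(n-1), c > 0, and φ(t) = exp(-(c·log(1/t))^{1/s}) with inverse u = φ⁻¹, there exists a constant C' > 0 (depending on n and c) such that for all sufficiently small r > 0, ∫_r^{r₀} (u(t)/u'(t))^{n-1} dt/t^n ≤ C'·log log(1/r), and hence r^n·exp(C₂·∫_r^{r₀}(u(t)/u'(t))^{n-1} dt/t^n) ≤ r^n·(log(1/r))^{C} for some C = C(n, c, C₂). -/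
/-!
Solving `φ(u) = t` gives the closed form `u(t) = exp (-(log (1/t))^s / c)`, whence
`u / u' = (c/s) t (log (1/t))^{1-s}`. Since `(1 - s)(n - 1) = -1`, the integrand collapses to
`(c/s)^{n-1} / (t log (1/t))`, whose primitive is `-(c/s)^{n-1} log log (1/t)`: the integral equals
`(c/s)^{n-1} (log log (1/r) - log log (1/r₀))`. Exponentiating the bound `C' log log (1/r)` gives the
power `(log (1/r))^{C₂ C'}`.
-/

open Filter Set Real Topology

/-- The inverse `u = φ⁻¹` of `φ(t) = exp (-(c log (1/t))^{1/s})`, in closed form. -/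
noncomputable def phiInv (c s t : ℝ) : ℝ := exp (-(-log t) ^ s / c)

lemma eq_phiInv_of_exp_eq {c s v t : ℝ} (hc : 0 < c) (hs : 0 < s) (hv0 : 0 < v) (hv1 : v ≤ 1)
    (h : exp (-(c * log (1 / v)) ^ (1 / s)) = t) : v = phiInv c s t := by
  have hX : 0 ≤ c * log (1 / v) :=
    mul_nonneg hc.le (log_nonneg (one_le_one_div hv0 hv1))
  subst h
  rw [phiInv, log_exp, neg_neg, ← rpow_mul hX, one_div_mul_cancel hs.ne', rpow_one, neg_div,
    mul_div_cancel_left₀ _ hc.ne', one_div, log_inv, neg_neg, exp_log hv0]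

lemma hasDerivAt_phiInv (c s : ℝ) {t : ℝ} (ht : t ∈ Ioo (0 : ℝ) 1) :
    HasDerivAt (phiInv c s) (phiInv c s t * (s * (-log t) ^ (s - 1) / (c * t))) t := by
  have hlog : -log t ≠ 0 := by linarith [log_neg ht.1 ht.2]
  have h : HasDerivAt (fun t => -log t) (-t⁻¹) t := (hasDerivAt_log ht.1.ne').neg
  have h' : HasDerivAt (fun t => -(-log t) ^ s / c) (-(-t⁻¹ * s * (-log t) ^ (s - 1)) / c) t :=
    (h.rpow_const (Or.inl hlog)).neg.div_const c
  refine h'.exp.congr_deriv ?_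
  rw [phiInv]
  field_simp

lemma phiInv_div_deriv {c s t : ℝ} (hc : c ≠ 0) (hs : s ≠ 0) (ht : t ∈ Ioo (0 : ℝ) 1) :
    phiInv c s t / deriv (phiInv c s) t = c / s * t * (-log t) ^ (1 - s) := by
  have hlog : 0 < -log t := by linarith [log_neg ht.1 ht.2]
  have hE : 0 < phiInv c s t := exp_pos _
  have hP : 0 < (-log t) ^ (s - 1) := rpow_pos_of_pos hlog _
  rw [(hasDerivAt_phiInv c s ht).deriv, show 1 - s = -(s - 1) by ring, rpow_neg hlog.le]
  field_simp [ht.1.ne']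

/-- The exponent relation `(s - 1) m = 1` is `s = n/(n-1)` with `m = n - 1`. -/
lemma phiInv_div_deriv_pow_div_pow {c s t : ℝ} {m : ℕ} (hc : c ≠ 0) (hsm : (s - 1) * m = 1)
    (ht : t ∈ Ioo (0 : ℝ) 1) :
    (phiInv c s t / deriv (phiInv c s) t) ^ m / t ^ (m + 1) = (c / s) ^ m * (t * -log t)⁻¹ := by
  have hlog : 0 < -log t := by linarith [log_neg ht.1 ht.2]
  have hs : s ≠ 0 := by
    rintro rfl
    have : (0 : ℝ) ≤ m := m.cast_nonneg
    linarith
  have hpow : ((-log t) ^ (1 - s)) ^ m = (-log t)⁻¹ := by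
    rw [← rpow_natCast, ← rpow_mul hlog.le, show (1 - s) * m = -1 by linarith, rpow_neg_one]
  rw [phiInv_div_deriv hc hs ht, mul_pow, mul_pow, hpow, pow_succ, mul_inv]
  field_simp [ht.1.ne']

lemma integral_inv_mul_neg_log {a b : ℝ} (ha : 0 < a) (hab : a ≤ b) (hb : b < 1) :
    ∫ t in a..b, (t * -log t)⁻¹ = log (-log a) - log (-log b) := by
  have hsub : uIcc a b ⊆ Ioo 0 1 := by
    rw [uIcc_of_le hab]
    exact Icc_subset_Ioo ha hb
  have hderiv : ∀ t ∈ uIcc a b, HasDerivAt (fun t => -log (-log t)) (t * -log t)⁻¹ t := by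
    intro t ht
    obtain ⟨ht0, ht1⟩ := hsub ht
    have hlog : -log t ≠ 0 := by linarith [log_neg ht0 ht1]
    have h : HasDerivAt (fun t => -log t) (-t⁻¹) t := (hasDerivAt_log ht0.ne').neg
    refine (h.log hlog).neg.congr_deriv ?_
    field_simp
  have hcont : ContinuousOn (fun t => (t * -log t)⁻¹) (uIcc a b) := by
    refine (continuousOn_id.mul (continuousOn_log.mono fun t ht => ?_).neg).inv₀ fun t ht => ?_
    · exact (hsub ht).1.ne'
    · obtain ⟨ht0, ht1⟩ := hsub ht
      have hlog : 0 < -log t := by linarith [log_neg ht0 ht1]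
      exact (mul_pos ht0 hlog).ne'
  rw [intervalIntegral.integral_eq_sub_of_hasDerivAt hderiv hcont.intervalIntegrable]
  ring

lemma integral_phiInv_div_deriv_pow_div_pow {c s a b : ℝ} {m : ℕ} (hc : c ≠ 0)
    (hsm : (s - 1) * m = 1) (ha : 0 < a) (hab : a ≤ b) (hb : b < 1) :
    ∫ t in a..b, (phiInv c s t / deriv (phiInv c s) t) ^ m / t ^ (m + 1)
      = (c / s) ^ m * (log (-log a) - log (-log b)) := by
  have hsub : uIcc a b ⊆ Ioo 0 1 := by
    rw [uIcc_of_le hab]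
    exact Icc_subset_Ioo ha hb
  rw [intervalIntegral.integral_congr fun t ht => phiInv_div_deriv_pow_div_pow hc hsm (hsub ht),
    intervalIntegral.integral_const_mul, integral_inv_mul_neg_log ha hab hb]

lemma sub_le_one_add_abs_mul {a b : ℝ} (ha : 1 ≤ a) : a - b ≤ (1 + |b|) * a := by
  nlinarith [neg_abs_le b, abs_nonneg b]

lemma tendsto_log_one_div_nhdsGT_zero : Tendsto (fun r : ℝ => log (1 / r)) (𝓝[>] 0) atTop := by
  simpa only [one_div, Function.comp_def] using tendsto_log_atTop.comp tendsto_inv_nhdsGT_zero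

lemma exp_mul_le_rpow_mul {x a b I : ℝ} (hx : 0 < x) (ha : 0 ≤ a) (hI : I ≤ b * log x) :
    exp (a * I) ≤ x ^ (a * b) := by
  rw [rpow_def_of_pos hx, mul_comm (log x), mul_assoc]
  exact exp_le_exp.mpr (mul_le_mul_of_nonneg_left hI ha)

theorem stmt3_general
    (n : ℕ) (hn : 2 ≤ n) (c C₂ : ℝ) (hc : 0 < c) (hC₂ : 0 < C₂)
    (s : ℝ) (hs : s = (n : ℝ) / (n - 1))
    (r₀ : ℝ) (hr₀ : 0 < r₀) (hr₀1 : r₀ < 1)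
    (u : ℝ → ℝ)
    (hu_pos : ∀ t ∈ Ioo (0:ℝ) 1, 0 < u t ∧ u t < 1)
    (hu_inv : ∀ t ∈ Ioo (0:ℝ) 1,
      Real.exp (-(c * Real.log (1 / u t)) ^ (1 / s)) = t) :
    (∃ C' > (0:ℝ), ∀ᶠ r in nhdsWithin 0 (Ioi 0),
      ∫ t in r..r₀, (u t / deriv u t) ^ (n - 1) / t ^ n
        ≤ C' * Real.log (Real.log (1 / r))) ∧
    (∃ C > (0:ℝ), ∀ᶠ r in nhdsWithin 0 (Ioi 0),
      r ^ n * Real.exp (C₂ * ∫ t in r..r₀, (u t / deriv u t) ^ (n - 1) / t ^ n)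
        ≤ r ^ n * Real.log (1 / r) ^ C) := by
  obtain ⟨m, rfl⟩ : ∃ m, n = m + 1 := ⟨n - 1, by omega⟩
  have hm : (1 : ℝ) ≤ m := by exact_mod_cast (by omega : 1 ≤ m)
  replace hs : s = (m + 1) / m := by rw [hs]; push_cast; ring
  have hs0 : 0 < s := by rw [hs]; positivity
  have hsm : (s - 1) * m = 1 := by rw [hs]; field_simp; ring
  have hu : EqOn u (phiInv c s) (Ioo 0 1) := fun t ht =>
    eq_phiInv_of_exp_eq hc hs0 (hu_pos t ht).1 (hu_pos t ht).2.le (hu_inv t ht)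
  have hintegral : ∀ r ∈ Ioc 0 r₀, ∫ t in r..r₀, (u t / deriv u t) ^ m / t ^ (m + 1)
      = (c / s) ^ m * (log (-log r) - log (-log r₀)) := fun r hr => by
    rw [← integral_phiInv_div_deriv_pow_div_pow hc.ne' hsm hr.1 hr.2 hr₀1]
    refine intervalIntegral.integral_congr fun t ht => ?_
    have htI : t ∈ Ioo 0 1 := (uIcc_of_le hr.2 ▸ Icc_subset_Ioo hr.1 hr₀1) ht
    simp only [hu htI, (hu.eventuallyEq_of_mem (isOpen_Ioo.mem_nhds htI)).deriv_eq]
  set C' := (c / s) ^ m * (1 + |log (-log r₀)|)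
  have hbound : ∀ᶠ r in 𝓝[>] 0, 0 < r ∧ 0 < log (1 / r) ∧
      ∫ t in r..r₀, (u t / deriv u t) ^ m / t ^ (m + 1) ≤ C' * log (log (1 / r)) := by
    filter_upwards [self_mem_nhdsWithin, (eventually_le_nhds hr₀).filter_mono nhdsWithin_le_nhds,
      tendsto_log_one_div_nhdsGT_zero.eventually_gt_atTop 0,
      (tendsto_log_atTop.comp tendsto_log_one_div_nhdsGT_zero).eventually_ge_atTop 1]
      with r hr0 hrr₀ hlog hloglog
    refine ⟨hr0, hlog, ?_⟩
    rw [Function.comp_apply, one_div, log_inv] at hloglog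
    rw [one_div, log_inv]
    rw [hintegral r ⟨hr0, hrr₀⟩, mul_assoc]
    exact mul_le_mul_of_nonneg_left (sub_le_one_add_abs_mul hloglog) (by positivity)
  simp only [Nat.add_sub_cancel]
  refine ⟨⟨C', by positivity, hbound.mono fun r hr => hr.2.2⟩,
    ⟨C₂ * C', by positivity, hbound.mono fun r ⟨hr0, hlog, hI⟩ => ?_⟩⟩
  exact mul_le_mul_of_nonneg_left (exp_mul_le_rpow_mul hlog hC₂.le hI) (by positivity)

/-- For `n ≥ 2`, `s = n/(n-1)`, `c > 0`, and
`φ(t) = exp(-(c log(1/t))^{1/s})` with inverse `u = φ⁻¹`, there is `C' > 0`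
(depending on `n` and `c`) such that for all sufficiently small `r > 0`,
`∫_r^{r₀} (u(t)/u'(t))^{n-1} dt/t^n ≤ C' log log(1/r)`, and hence
`r^n exp(C₂ ∫_r^{r₀} (u(t)/u'(t))^{n-1} dt/t^n) ≤ r^n (log(1/r))^C` for some
`C = C(n, c, C₂)`. -/
theorem stmt3
    (n : ℕ) (hn : 2 ≤ n) (c C₂ : ℝ) (hc : 0 < c) (hC₂ : 0 < C₂)
    (s : ℝ) (hs : s = (n : ℝ) / (n - 1))
    (r₀ : ℝ) (hr₀ : 0 < r₀) (hr₀1 : r₀ < 1)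
    (u : ℝ → ℝ)
    (hu_pos : ∀ t ∈ Ioo (0:ℝ) 1, 0 < u t ∧ u t < 1)
    (hu_inv : ∀ t ∈ Ioo (0:ℝ) 1,
      Real.exp (-(c * Real.log (1 / u t)) ^ (1 / s)) = t)
    (hu_diff : ∀ t ∈ Ioo (0:ℝ) 1, DifferentiableAt ℝ u t)
    (hu_deriv_pos : ∀ t ∈ Ioo (0:ℝ) 1, 0 < deriv u t) :
    (∃ C' > (0:ℝ), ∀ᶠ r in nhdsWithin 0 (Ioi 0),
      ∫ t in r..r₀, (u t / deriv u t) ^ (n - 1) / t ^ n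
        ≤ C' * Real.log (Real.log (1 / r))) ∧
    (∃ C > (0:ℝ), ∀ᶠ r in nhdsWithin 0 (Ioi 0),
      r ^ n * Real.exp (C₂ * ∫ t in r..r₀, (u t / deriv u t) ^ (n - 1) / t ^ n)
        ≤ r ^ n * Real.log (1 / r) ^ C) :=
  stmt3_general n hn c C₂ hc hC₂ s hs r₀ hr₀ hr₀1 u hu_pos hu_inv
end

section
/- For n = 2, the condition ∫₀ (u(t)/u'(t)) dt/t² = ∞ with u = φ⁻¹ is equivalent to the Jones–Makarov condition ∫₀ |log φ(t)/log t|² dt/t = ∞, for any weight function φ satisfying the regularity assumptions that φ is increasing, differentiable, doubling, and φ'(t)t log t/(φ(t) log φ(t)) is monotone. -/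
/-!
Substituting `t = φ s` turns `∫ (u/u') dt/t²` into `∫ s (φ'(s)/φ(s))² ds`, whose integrand is
`g(s)² w(s)`, where `w(s) = (log φ(s)/log s)²/s` is the Jones–Makarov density and
`g = φ' s log s/(φ log φ)` is the monotone ratio of the hypothesis. Near `0`, a monotone `g`
either stays below `1/4`, stays above `1`, or is squeezed between `1/4` and a constant.
In the last case the two integrands are comparable. If `g ≤ 1/4`, then `(log φ)²/log s` has
derivative `(2g - 1) w ≤ -w/2`, so `∫ w` converges, and so does `∫ g² w ≤ ∫ w`. If `g ≥ 1`, then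
`log φ(s)/log s` decreases, so `w(s) ≥ c/s` and both integrals diverge.
-/

open Filter Set Real MeasureTheory Topology intervalIntegral

theorem Filter.tendsto_iff_of_eventuallyEq_comp {α β : Type*} {l : Filter α} {l' : Filter β}
    {F G : α → β} {u v : α → α} (hu : Tendsto u l l) (hv : Tendsto v l l)
    (huv : ∀ᶠ x in l, u (v x) = x) (hF : F =ᶠ[l] G ∘ u) :
    Tendsto F l l' ↔ Tendsto G l l' := by
  refine ⟨fun h => (h.comp hv).congr' ?_, fun h => (h.comp hu).congr' hF.symm⟩
  filter_upwards [hv.eventually hF, huv] with x hFx hux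
  simp [hFx, hux]

theorem MonotoneOn.monotoneOn_of_rightInvOn {α β : Type*} [LinearOrder α] [PartialOrder β]
    {φ : α → β} {u : β → α} {s : Set β} {t : Set α} (hφ : MonotoneOn φ t) (hu : MapsTo u s t)
    (hφu : RightInvOn u φ s) : MonotoneOn u s := fun x hx y hy hxy => le_of_not_gt fun h => by
  have hyx := hφ (hu hy) (hu hx) h.le
  rw [hφu hx, hφu hy] at hyx
  exact h.ne (by rw [le_antisymm hxy hyx])

theorem exists_Ioc_trichotomy_of_monotoneOn_or_antitoneOn {g : ℝ → ℝ} {a : ℝ} (ha : 0 < a)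
    (hg : MonotoneOn g (Ioo 0 a) ∨ AntitoneOn g (Ioo 0 a)) (m M : ℝ) :
    ∃ c ∈ Ioo 0 a, (∀ t ∈ Ioc 0 c, g t ≤ m) ∨ (∀ t ∈ Ioc 0 c, M ≤ g t) ∨
      ∃ K, ∀ t ∈ Ioc 0 c, m ≤ g t ∧ g t ≤ K := by
  have hsub : ∀ c ∈ Ioo 0 a, Ioc 0 c ⊆ Ioo 0 a := fun c hc t ht => ⟨ht.1, ht.2.trans_lt hc.2⟩
  have ha2 : a / 2 ∈ Ioo 0 a := ⟨by positivity, by linarith⟩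
  rcases hg with hg | hg
  · by_cases hlow : ∃ c ∈ Ioo 0 a, g c ≤ m
    · obtain ⟨c, hc, hgc⟩ := hlow
      exact ⟨c, hc, .inl fun t ht => (hg (hsub c hc ht) hc ht.2).trans hgc⟩
    · push Not at hlow
      exact ⟨a / 2, ha2, .inr <| .inr ⟨g (a / 2), fun t ht =>
        ⟨(hlow t (hsub _ ha2 ht)).le, hg (hsub _ ha2 ht) ha2 ht.2⟩⟩⟩
  · by_cases hhigh : ∃ c ∈ Ioo 0 a, M ≤ g c
    · obtain ⟨c, hc, hgc⟩ := hhigh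
      exact ⟨c, hc, .inr <| .inl fun t ht => hgc.trans (hg (hsub c hc ht) hc ht.2)⟩
    push Not at hhigh
    by_cases hmid : ∃ c ∈ Ioo 0 a, m ≤ g c
    · obtain ⟨c, hc, hgc⟩ := hmid
      exact ⟨c, hc, .inr <| .inr ⟨M, fun t ht =>
        ⟨hgc.trans (hg (hsub c hc ht) hc ht.2), (hhigh t (hsub c hc ht)).le⟩⟩⟩
    · push Not at hmid
      exact ⟨a / 2, ha2, .inl fun t ht => (hmid t (hsub _ ha2 ht)).le⟩

theorem deriv_mul_deriv_eq_one_of_eventually_rightInverse {φ u : ℝ → ℝ} {x : ℝ}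
    (hφ : DifferentiableAt ℝ φ (u x)) (hu : DifferentiableAt ℝ u x)
    (hφu : ∀ᶠ y in 𝓝 x, φ (u y) = y) : deriv φ (u x) * deriv u x = 1 :=
  ((hφ.hasDerivAt.comp x hu.hasDerivAt).congr_of_eventuallyEq
    (hφu.mono fun _ h => h.symm)).unique (hasDerivAt_id x)

theorem MeasureTheory.locallyIntegrableOn_of_monotoneOn_or_antitoneOn {f : ℝ → ℝ} {s : Set ℝ}
    (hs : IsLocallyClosed s) (hf : MonotoneOn f s ∨ AntitoneOn f s) : LocallyIntegrableOn f s := by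
  rw [locallyIntegrableOn_iff hs]
  intro k hk hkc
  rcases hf with hf | hf
  exacts [(hf.mono hk).integrableOn_isCompact hkc, (hf.mono hk).integrableOn_isCompact hkc]

def IntegralDivergesAtZero (w : ℝ → ℝ) (c : ℝ) : Prop :=
  Tendsto (fun δ => ∫ x in δ..c, w x) (𝓝[>] 0) atTop

section IntegralDivergesAtZero

variable {w w₁ w₂ : ℝ → ℝ} {c : ℝ}

theorem MeasureTheory.LocallyIntegrableOn.intervalIntegrable_of_mem_Ioc
    (hw : LocallyIntegrableOn w (Ioc 0 c)) {δ : ℝ} (hδ : δ ∈ Ioc 0 c) :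
    IntervalIntegrable w volume δ c := by
  refine (hw.integrableOn_compact_subset ?_ isCompact_uIcc).intervalIntegrable
  rw [uIcc_of_le hδ.2]
  exact Icc_subset_Ioc hδ.1 le_rfl

theorem integralDivergesAtZero_iff_of_le {c₁ c₂ : ℝ} (hw : LocallyIntegrableOn w (Ioc 0 c₂))
    (h₀ : 0 < c₁) (h₁₂ : c₁ ≤ c₂) :
    IntegralDivergesAtZero w c₁ ↔ IntegralDivergesAtZero w c₂ := by
  have hsplit : (fun δ => (∫ x in δ..c₁, w x) + ∫ x in c₁..c₂, w x) =ᶠ[𝓝[>] 0]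
      fun δ => ∫ x in δ..c₂, w x := by
    filter_upwards [Ioo_mem_nhdsGT h₀] with δ hδ
    refine integral_add_adjacent_intervals ?_ (hw.intervalIntegrable_of_mem_Ioc ⟨h₀, h₁₂⟩)
    exact (hw.mono_set (Ioc_subset_Ioc_right h₁₂)).intervalIntegrable_of_mem_Ioc ⟨hδ.1, hδ.2.le⟩
  refine ⟨fun h => (tendsto_atTop_add_const_right _ _ h).congr' hsplit, fun h => ?_⟩
  simpa [IntegralDivergesAtZero] using
    tendsto_atTop_add_const_right _ (-∫ x in c₁..c₂, w x) (h.congr' hsplit.symm)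

theorem IntegralDivergesAtZero.mono (h : IntegralDivergesAtZero w₁ c) (hc : 0 < c)
    (hw₁ : LocallyIntegrableOn w₁ (Ioc 0 c)) (hw₂ : LocallyIntegrableOn w₂ (Ioc 0 c))
    (hle : ∀ t ∈ Ioc 0 c, w₁ t ≤ w₂ t) : IntegralDivergesAtZero w₂ c := by
  refine tendsto_atTop_mono' _ ?_ h
  filter_upwards [Ioo_mem_nhdsGT hc] with δ ⟨hδ, hδc⟩
  exact integral_mono_on hδc.le (hw₁.intervalIntegrable_of_mem_Ioc ⟨hδ, hδc.le⟩)
    (hw₂.intervalIntegrable_of_mem_Ioc ⟨hδ, hδc.le⟩) fun t ht => hle t ⟨hδ.trans_le ht.1, ht.2⟩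

theorem not_integralDivergesAtZero_of_le {K : ℝ} (hc : 0 < c)
    (hK : ∀ δ ∈ Ioo 0 c, ∫ x in δ..c, w x ≤ K) : ¬ IntegralDivergesAtZero w c := fun h =>
  let ⟨_, hδK, hδ⟩ := ((h.eventually_gt_atTop K).and (Ioo_mem_nhdsGT hc)).exists
  (hK _ hδ).not_gt hδK

theorem integralDivergesAtZero_const_mul_iff {k : ℝ} (hk : 0 < k) :
    IntegralDivergesAtZero (fun t => k * w t) c ↔ IntegralDivergesAtZero w c := by
  simp only [IntegralDivergesAtZero, intervalIntegral.integral_const_mul]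
  exact tendsto_const_mul_atTop_of_pos hk

theorem integralDivergesAtZero_iff_of_mul_le_of_le_mul {m M : ℝ} (hc : 0 < c) (hm : 0 < m)
    (hM : 0 < M) (hw₁ : LocallyIntegrableOn w₁ (Ioc 0 c)) (hw₂ : LocallyIntegrableOn w₂ (Ioc 0 c))
    (hbounds : ∀ t ∈ Ioc 0 c, m * w₂ t ≤ w₁ t ∧ w₁ t ≤ M * w₂ t) :
    IntegralDivergesAtZero w₁ c ↔ IntegralDivergesAtZero w₂ c :=
  ⟨fun h => (integralDivergesAtZero_const_mul_iff hM).1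
      (h.mono hc hw₁ (hw₂.smul M) fun t ht => (hbounds t ht).2),
    fun h => ((integralDivergesAtZero_const_mul_iff hm).2 h).mono hc (hw₂.smul m) hw₁
      fun t ht => (hbounds t ht).1⟩

theorem integralDivergesAtZero_inv (hc : 0 < c) : IntegralDivergesAtZero (fun t => t⁻¹) c := by
  have hlog : Tendsto (fun δ => -log δ + log c) (𝓝[>] 0) atTop :=
    tendsto_atTop_add_const_right _ _ (tendsto_neg_atBot_atTop.comp tendsto_log_nhdsGT_zero)
  refine hlog.congr' ?_
  filter_upwards [self_mem_nhdsWithin] with δ (hδ : 0 < δ)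
  rw [integral_inv_of_pos hδ hc, log_div hc.ne' hδ.ne']
  ring

end IntegralDivergesAtZero

/-- The derivative of `log (-log φ)` with respect to `log (-log t)`. -/
noncomputable def loglogSlope (φ : ℝ → ℝ) (t : ℝ) : ℝ :=
  deriv φ t * t * log t / (φ t * log (φ t))

noncomputable def jonesMakarovDensity (φ : ℝ → ℝ) (t : ℝ) : ℝ :=
  |log (φ t) / log t| ^ 2 / t

/-- The integrand of `∫ (u t / u' t) / t² dt`, `u = φ⁻¹`, after the substitution `t = φ s`. -/
noncomputable def logDerivDensity (φ : ℝ → ℝ) (t : ℝ) : ℝ :=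
  t * (deriv φ t / φ t) ^ 2

section Densities

variable {φ : ℝ → ℝ} {t : ℝ}

theorem logDerivDensity_eq_loglogSlope_sq_mul (ht : t ∈ Ioo 0 1) (hφt : φ t ∈ Ioo 0 1) :
    logDerivDensity φ t = loglogSlope φ t ^ 2 * jonesMakarovDensity φ t := by
  have := (log_neg ht.1 ht.2).ne
  have := (log_neg hφt.1 hφt.2).ne
  have := ht.1.ne'
  have := hφt.1.ne'
  simp only [logDerivDensity, loglogSlope, jonesMakarovDensity, sq_abs]
  field_simp

theorem loglogSlope_nonneg (ht : t ∈ Ioo 0 1) (hφt : φ t ∈ Ioo 0 1) (hφ' : 0 ≤ deriv φ t) :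
    0 ≤ loglogSlope φ t :=
  div_nonneg_of_nonpos
    (mul_nonpos_of_nonneg_of_nonpos (by positivity [ht.1]) (log_nonpos ht.1.le ht.2.le))
    (mul_nonpos_of_nonneg_of_nonpos hφt.1.le (log_nonpos hφt.1.le hφt.2.le))

theorem jonesMakarovDensity_nonneg (ht : 0 ≤ t) : 0 ≤ jonesMakarovDensity φ t := by
  unfold jonesMakarovDensity; positivity

theorem continuousOn_jonesMakarovDensity {s : Set ℝ} (hφ : ContinuousOn φ s)
    (hφ0 : ∀ t ∈ s, φ t ≠ 0) (hs : s ⊆ Ioo 0 1) : ContinuousOn (jonesMakarovDensity φ) s :=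
  (((hφ.log hφ0).div (continuousOn_log.mono fun _ hx => (hs hx).1.ne')
    fun _ hx => (log_neg (hs hx).1 (hs hx).2).ne).abs.pow 2).div continuousOn_id
    fun _ hx => (hs hx).1.ne'

theorem hasDerivAt_log_sq_div_log (ht : t ∈ Ioo 0 1) (hφt : φ t ∈ Ioo 0 1)
    (hφ : DifferentiableAt ℝ φ t) :
    HasDerivAt (fun s => log (φ s) ^ 2 / log s)
      ((2 * loglogSlope φ t - 1) * jonesMakarovDensity φ t) t := by
  have := (log_neg ht.1 ht.2).ne
  have := (log_neg hφt.1 hφt.2).ne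
  have := ht.1.ne'
  have := hφt.1.ne'
  refine (((hφ.hasDerivAt.log hφt.1.ne').pow 2).div (hasDerivAt_log ht.1.ne')
    (log_neg ht.1 ht.2).ne).congr_deriv ?_
  simp only [loglogSlope, jonesMakarovDensity, sq_abs, Pi.pow_apply]
  field_simp
  ring

theorem hasDerivAt_log_div_log (ht : t ∈ Ioo 0 1) (hφt : φ t ∈ Ioo 0 1)
    (hφ : DifferentiableAt ℝ φ t) :
    HasDerivAt (fun s => log (φ s) / log s)
      ((loglogSlope φ t - 1) * log (φ t) / (t * log t ^ 2)) t := by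
  have := (log_neg ht.1 ht.2).ne
  have := (log_neg hφt.1 hφt.2).ne
  have := ht.1.ne'
  have := hφt.1.ne'
  refine ((hφ.hasDerivAt.log hφt.1.ne').div (hasDerivAt_log ht.1.ne')
    (log_neg ht.1 ht.2).ne).congr_deriv ?_
  simp only [loglogSlope]
  field_simp

end Densities

section Comparison

variable {φ : ℝ → ℝ} {a c : ℝ}

theorem not_integralDivergesAtZero_jonesMakarovDensity (hc : c ∈ Ioo 0 1)
    (hφ : ∀ t ∈ Ioc 0 c, φ t ∈ Ioo 0 1) (hdiff : ∀ t ∈ Ioc 0 c, DifferentiableAt ℝ φ t)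
    (hg : ∀ t ∈ Ioc 0 c, loglogSlope φ t ≤ 1 / 4) :
    ¬ IntegralDivergesAtZero (jonesMakarovDensity φ) c := by
  have hI : Ioc 0 c ⊆ Ioo 0 1 := fun t ht => ⟨ht.1, ht.2.trans_lt hc.2⟩
  set A := fun s => log (φ s) ^ 2 / log s
  have hA : ∀ t ∈ Ioc 0 c, HasDerivAt (fun s => -2 * A s)
      (-2 * ((2 * loglogSlope φ t - 1) * jonesMakarovDensity φ t)) t := fun t ht =>
    (hasDerivAt_log_sq_div_log (hI ht) (hφ t ht) (hdiff t ht)).const_mul (-2)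
  have hw : ContinuousOn (jonesMakarovDensity φ) (Ioc 0 c) :=
    continuousOn_jonesMakarovDensity (fun t ht => (hdiff t ht).continuousAt.continuousWithinAt)
      (fun t ht => (hφ t ht).1.ne') hI
  refine not_integralDivergesAtZero_of_le hc.1 (K := -2 * A c) fun δ hδ => ?_
  have hsub : Icc δ c ⊆ Ioc 0 c := Icc_subset_Ioc hδ.1 le_rfl
  have hAδ : A δ ≤ 0 :=
    div_nonpos_of_nonneg_of_nonpos (sq_nonneg _) (log_nonpos hδ.1.le (hI ⟨hδ.1, hδ.2.le⟩).2.le)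
  calc ∫ x in δ..c, jonesMakarovDensity φ x ≤ -2 * A c - -2 * A δ := by
        refine integral_le_sub_of_hasDeriv_right_of_le hδ.2.le
          (fun x hx => (hA x (hsub hx)).continuousAt.continuousWithinAt)
          (fun x hx => (hA x (hsub (Ioo_subset_Icc_self hx))).hasDerivWithinAt)
          ((hw.mono hsub).integrableOn_Icc) fun x hx => ?_
        have hx' := hsub (Ioo_subset_Icc_self hx)
        nlinarith [hg x hx', jonesMakarovDensity_nonneg (φ := φ) hx'.1.le]
    _ ≤ -2 * A c := by linarith

theorem integralDivergesAtZero_jonesMakarovDensity (hc : c ∈ Ioo 0 1)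
    (hφ : ∀ t ∈ Ioc 0 c, φ t ∈ Ioo 0 1) (hdiff : ∀ t ∈ Ioc 0 c, DifferentiableAt ℝ φ t)
    (hg : ∀ t ∈ Ioc 0 c, 1 ≤ loglogSlope φ t) :
    IntegralDivergesAtZero (jonesMakarovDensity φ) c := by
  have hI : Ioc 0 c ⊆ Ioo 0 1 := fun t ht => ⟨ht.1, ht.2.trans_lt hc.2⟩
  set R := fun s => log (φ s) / log s
  have hR' := fun t (ht : t ∈ Ioc 0 c) => hasDerivAt_log_div_log (hI ht) (hφ t ht) (hdiff t ht)
  have hR : AntitoneOn R (Ioc 0 c) := by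
    refine antitoneOn_of_hasDerivWithinAt_nonpos (convex_Ioc 0 c)
      (f' := fun x => (loglogSlope φ x - 1) * log (φ x) / (x * log x ^ 2))
      (fun x hx => (hR' x hx).continuousAt.continuousWithinAt) (fun x hx => ?_) fun x hx => ?_
    all_goals rw [interior_Ioc] at hx; have hx' := Ioo_subset_Ioc_self hx
    · exact (hR' x hx').hasDerivWithinAt
    · exact div_nonpos_of_nonpos_of_nonneg (mul_nonpos_of_nonneg_of_nonpos
        (sub_nonneg.2 (hg x hx')) (log_nonpos (hφ x hx').1.le (hφ x hx').2.le))
        (by positivity [hx.1])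
  have hφc := hφ c ⟨hc.1, le_rfl⟩
  have hRc : 0 < R c := div_pos_of_neg_of_neg (log_neg hφc.1 hφc.2) (log_neg hc.1 hc.2)
  have hw : ContinuousOn (jonesMakarovDensity φ) (Ioc 0 c) :=
    continuousOn_jonesMakarovDensity (fun t ht => (hdiff t ht).continuousAt.continuousWithinAt)
      (fun t ht => (hφ t ht).1.ne') hI
  have hinv : ContinuousOn (fun t : ℝ => t⁻¹) (Ioc 0 c) :=
    continuousOn_inv₀.mono fun t ht => ht.1.ne'
  refine ((integralDivergesAtZero_const_mul_iff (pow_pos hRc 2)).2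
    (integralDivergesAtZero_inv hc.1)).mono hc.1
    ((hinv.locallyIntegrableOn measurableSet_Ioc).smul (R c ^ 2))
    (hw.locallyIntegrableOn measurableSet_Ioc) fun t ht => ?_
  have hRt : R c ≤ R t := hR ht ⟨hc.1, le_rfl⟩ ht.2
  rw [jonesMakarovDensity, sq_abs, div_eq_mul_inv]
  gcongr
  exact inv_nonneg.2 ht.1.le

theorem integralDivergesAtZero_logDerivDensity_iff_of_trichotomy (hc : c ∈ Ioo 0 1)
    (hφ : ∀ t ∈ Ioc 0 c, φ t ∈ Ioo 0 1) (hdiff : ∀ t ∈ Ioc 0 c, DifferentiableAt ℝ φ t)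
    (hg : ∀ t ∈ Ioc 0 c, 0 ≤ loglogSlope φ t)
    (hh : LocallyIntegrableOn (logDerivDensity φ) (Ioc 0 c))
    (hcases : (∀ t ∈ Ioc 0 c, loglogSlope φ t ≤ 1 / 4) ∨ (∀ t ∈ Ioc 0 c, 1 ≤ loglogSlope φ t) ∨
      ∃ K, ∀ t ∈ Ioc 0 c, 1 / 4 ≤ loglogSlope φ t ∧ loglogSlope φ t ≤ K) :
    IntegralDivergesAtZero (logDerivDensity φ) c ↔
      IntegralDivergesAtZero (jonesMakarovDensity φ) c := by
  have hI : Ioc 0 c ⊆ Ioo 0 1 := fun t ht => ⟨ht.1, ht.2.trans_lt hc.2⟩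
  have hw : LocallyIntegrableOn (jonesMakarovDensity φ) (Ioc 0 c) :=
    (continuousOn_jonesMakarovDensity (fun t ht => (hdiff t ht).continuousAt.continuousWithinAt)
      (fun t ht => (hφ t ht).1.ne') hI).locallyIntegrableOn measurableSet_Ioc
  have heq : ∀ t ∈ Ioc 0 c,
      logDerivDensity φ t = loglogSlope φ t ^ 2 * jonesMakarovDensity φ t :=
    fun t ht => logDerivDensity_eq_loglogSlope_sq_mul (hI ht) (hφ t ht)
  have hw0 : ∀ t ∈ Ioc 0 c, 0 ≤ jonesMakarovDensity φ t :=
    fun t ht => jonesMakarovDensity_nonneg ht.1.le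
  rcases hcases with hsmall | hbig | ⟨K, hmid⟩
  · have hW := not_integralDivergesAtZero_jonesMakarovDensity hc hφ hdiff hsmall
    refine iff_of_false (fun hH => hW (hH.mono hc.1 hh hw fun t ht => ?_)) hW
    rw [heq t ht]
    exact mul_le_of_le_one_left (hw0 t ht) (pow_le_one₀ (hg t ht) (by linarith [hsmall t ht]))
  · have hW := integralDivergesAtZero_jonesMakarovDensity hc hφ hdiff hbig
    refine iff_of_true (hW.mono hc.1 hw hh fun t ht => ?_) hW
    rw [heq t ht]
    exact le_mul_of_one_le_left (hw0 t ht) (one_le_pow₀ (hbig t ht))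
  · have hK : 0 < K := by linarith [hmid c ⟨hc.1, le_rfl⟩]
    refine integralDivergesAtZero_iff_of_mul_le_of_le_mul hc.1 (m := (1 / 4) ^ 2) (M := K ^ 2)
      (by norm_num) (by positivity) hh hw fun t ht => ?_
    rw [heq t ht]
    obtain ⟨hm, hM⟩ := hmid t ht
    exact ⟨mul_le_mul_of_nonneg_right (pow_le_pow_left₀ (by norm_num) hm 2) (hw0 t ht),
      mul_le_mul_of_nonneg_right (pow_le_pow_left₀ (hg t ht) hM 2) (hw0 t ht)⟩

theorem locallyIntegrableOn_logDerivDensity (ha : a ≤ 1) (hφ : ∀ t ∈ Ioo 0 a, φ t ∈ Ioo 0 1)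
    (hdiff : ∀ t ∈ Ioo 0 a, DifferentiableAt ℝ φ t)
    (hreg : MonotoneOn (loglogSlope φ) (Ioo 0 a) ∨ AntitoneOn (loglogSlope φ) (Ioo 0 a))
    (hg : ∀ t ∈ Ioo 0 a, 0 ≤ loglogSlope φ t) :
    LocallyIntegrableOn (logDerivDensity φ) (Ioo 0 a) := by
  have hI : Ioo 0 a ⊆ Ioo 0 1 := Ioo_subset_Ioo_right ha
  have hsq : MonotoneOn (fun t => loglogSlope φ t ^ 2) (Ioo 0 a) ∨
      AntitoneOn (fun t => loglogSlope φ t ^ 2) (Ioo 0 a) :=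
    hreg.imp (fun h x hx y hy hxy => pow_le_pow_left₀ (hg x hx) (h hx hy hxy) 2)
      fun h x hx y hy hxy => pow_le_pow_left₀ (hg y hy) (h hx hy hxy) 2
  have hprod := (locallyIntegrableOn_of_monotoneOn_or_antitoneOn isOpen_Ioo.isLocallyClosed
    hsq).mul_continuousOn (continuousOn_jonesMakarovDensity
      (fun t ht => (hdiff t ht).continuousAt.continuousWithinAt) (fun t ht => (hφ t ht).1.ne') hI)
    isOpen_Ioo.isLocallyClosed
  rw [locallyIntegrableOn_iff isOpen_Ioo.isLocallyClosed] at hprod ⊢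
  exact fun k hk hkc => (hprod k hk hkc).congr_fun (fun t ht =>
    (logDerivDensity_eq_loglogSlope_sq_mul (hI (hk ht)) (hφ t (hk ht))).symm) hkc.measurableSet

theorem integralDivergesAtZero_logDerivDensity_iff {b : ℝ} (ha : a ≤ 1)
    (hφ : ∀ t ∈ Ioo 0 a, φ t ∈ Ioo 0 1) (hmono : MonotoneOn φ (Ioo 0 a))
    (hdiff : ∀ t ∈ Ioo 0 a, DifferentiableAt ℝ φ t)
    (hreg : MonotoneOn (loglogSlope φ) (Ioo 0 a) ∨ AntitoneOn (loglogSlope φ) (Ioo 0 a))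
    (hb : b ∈ Ioo 0 a) (hc : c ∈ Ioo 0 a) :
    IntegralDivergesAtZero (logDerivDensity φ) b ↔
      IntegralDivergesAtZero (jonesMakarovDensity φ) c := by
  have hI : Ioo 0 a ⊆ Ioo 0 1 := Ioo_subset_Ioo_right ha
  have hg : ∀ t ∈ Ioo 0 a, 0 ≤ loglogSlope φ t := fun t ht =>
    loglogSlope_nonneg (hI ht) (hφ t ht) (by
      rw [← derivWithin_of_isOpen isOpen_Ioo ht]; exact hmono.derivWithin_nonneg)
  have hh := locallyIntegrableOn_logDerivDensity ha hφ hdiff hreg hg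
  have hw : LocallyIntegrableOn (jonesMakarovDensity φ) (Ioo 0 a) :=
    (continuousOn_jonesMakarovDensity (fun t ht => (hdiff t ht).continuousAt.continuousWithinAt)
      (fun t ht => (hφ t ht).1.ne') hI).locallyIntegrableOn measurableSet_Ioo
  have hbc : Ioo 0 (min b c) ⊆ Ioo 0 a := Ioo_subset_Ioo_right ((min_le_left _ _).trans hb.2.le)
  obtain ⟨d, hd, hcases⟩ := exists_Ioc_trichotomy_of_monotoneOn_or_antitoneOn
    (lt_min hb.1 hc.1) (hreg.imp (·.mono hbc) (·.mono hbc)) (1 / 4) 1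
  have hda : Ioc 0 d ⊆ Ioo 0 a := Ioc_subset_Ioo_right (hbc hd).2
  rw [← integralDivergesAtZero_iff_of_le (hh.mono_set (Ioc_subset_Ioo_right hb.2)) hd.1
      (hd.2.le.trans (min_le_left _ _)),
    ← integralDivergesAtZero_iff_of_le (hw.mono_set (Ioc_subset_Ioo_right hc.2)) hd.1
      (hd.2.le.trans (min_le_right _ _))]
  exact integralDivergesAtZero_logDerivDensity_iff_of_trichotomy (hI (hbc hd))
    (fun t ht => hφ t (hda ht)) (fun t ht => hdiff t (hda ht)) (fun t ht => hg t (hda ht))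
    (hh.mono_set hda) hcases

end Comparison

section Substitution

variable {φ u : ℝ → ℝ} {a : ℝ}

theorem tendsto_nhdsGT_zero_of_rightInvOn (ha : 0 < a) (hmono : MonotoneOn φ (Ioo 0 a))
    (hpos : ∀ t ∈ Ioo 0 a, 0 < φ t) (hφu : RightInvOn u φ (Ioo 0 a))
    (hu : MapsTo u (Ioo 0 a) (Ioo 0 a)) : Tendsto u (𝓝[>] 0) (𝓝[>] 0) := by
  have hI : Ioo 0 a ∈ 𝓝[>] (0 : ℝ) := Ioo_mem_nhdsGT ha
  refine tendsto_nhdsWithin_iff.2 ⟨tendsto_order.2 ⟨fun b hb => ?_, fun b hb => ?_⟩, ?_⟩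
  · filter_upwards [hI] with ε hε using hb.trans (hu hε).1
  · obtain ⟨η, hη, hηb⟩ : ∃ η ∈ Ioo 0 a, η < b := by
      have := lt_min hb ha
      exact ⟨min b a / 2, ⟨by positivity, by linarith [min_le_right b a]⟩,
        by linarith [min_le_left b a]⟩
    filter_upwards [Ioo_mem_nhdsGT (lt_min (hpos η hη) ha)] with ε hε
    have hεI : ε ∈ Ioo 0 a := ⟨hε.1, hε.2.trans_le (min_le_right _ _)⟩
    by_contra! hbu
    have hφη := hmono hη (hu hεI) (hηb.le.trans hbu)
    rw [hφu hεI] at hφη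
    linarith [hε.2.trans_le (min_le_left _ _)]
  · filter_upwards [hI] with ε hε using (hu hε).1

theorem integral_div_deriv_div_sq_eq_integral_logDerivDensity {ε r : ℝ}
    (hmono : MonotoneOn φ (Ioo 0 a)) (hdiff : ∀ t ∈ Ioo 0 a, DifferentiableAt ℝ φ t)
    (hφu : RightInvOn u φ (Ioo 0 a)) (huφ : LeftInvOn u φ (Ioo 0 a))
    (hu : MapsTo u (Ioo 0 a) (Ioo 0 a)) (hu' : ∀ t ∈ Ioo 0 a, deriv u t ≠ 0)
    (hε : 0 < ε) (hεr : ε ≤ r) (hr : r < a) :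
    ∫ t in ε..r, (u t / deriv u t) / t ^ 2 = ∫ s in u ε..u r, logDerivDensity φ s := by
  have hεI : ε ∈ Ioo 0 a := ⟨hε, hεr.trans_lt hr⟩
  have hrI : r ∈ Ioo 0 a := ⟨hε.trans_le hεr, hr⟩
  have hur : u ε ≤ u r := (hmono.monotoneOn_of_rightInvOn hu hφu) hεI hrI hεr
  have hsub : uIcc (u ε) (u r) ⊆ Ioo 0 a := by
    rw [uIcc_of_le hur]; exact ordConnected_Ioo.out (hu hεI) (hu hrI)
  have hcov := integral_comp_mul_deriv_of_deriv_nonneg (g := fun t => (u t / deriv u t) / t ^ 2)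
    (a := u ε) (b := u r) (f := φ) (f' := deriv φ)
    (fun s hs => (hdiff s (hsub hs)).continuousAt.continuousWithinAt)
    (fun s hs => (hdiff s (hsub (Ioo_subset_Icc_self hs))).hasDerivAt)
    fun s hs => by
      rw [← derivWithin_of_isOpen isOpen_Ioo (hsub (Ioo_subset_Icc_self hs))]
      exact hmono.derivWithin_nonneg
  rw [hφu hεI, hφu hrI] at hcov
  rw [← hcov]
  refine integral_congr fun s hs => ?_
  have hsI := hsub hs
  rw [uIcc_of_le hur] at hs
  have hφs : φ s ∈ Ioo 0 a := by
    refine ⟨hε.trans_le ?_, lt_of_le_of_lt ?_ hr⟩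
    · simpa only [hφu hεI] using hmono (hu hεI) hsI hs.1
    · simpa only [hφu hrI] using hmono hsI (hu hrI) hs.2
  have hchain : deriv φ s * deriv u (φ s) = 1 := by
    have := deriv_mul_deriv_eq_one_of_eventually_rightInverse (u := u) (x := φ s)
      (by rw [huφ hsI]; exact hdiff s hsI)
      (differentiableAt_of_deriv_ne_zero (hu' _ hφs))
      (Filter.mem_of_superset (isOpen_Ioo.mem_nhds hφs) fun y hy => hφu hy)
    rwa [huφ hsI] at this
  have := hφs.1.ne'
  have := left_ne_zero_of_mul_eq_one hchain
  simp only [Function.comp, logDerivDensity, huφ hsI, eq_inv_of_mul_eq_one_right hchain]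
  field_simp

theorem tendsto_integral_div_deriv_div_sq_iff {r : ℝ} (hr : r ∈ Ioo 0 a)
    (hpos : ∀ t ∈ Ioo 0 a, 0 < φ t) (hmono : MonotoneOn φ (Ioo 0 a))
    (hdiff : ∀ t ∈ Ioo 0 a, DifferentiableAt ℝ φ t) (hlim : Tendsto φ (𝓝[>] 0) (𝓝 0))
    (hφu : RightInvOn u φ (Ioo 0 a)) (huφ : LeftInvOn u φ (Ioo 0 a))
    (hu : MapsTo u (Ioo 0 a) (Ioo 0 a)) (hu' : ∀ t ∈ Ioo 0 a, deriv u t ≠ 0) :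
    Tendsto (fun ε => ∫ t in ε..r, (u t / deriv u t) / t ^ 2) (𝓝[>] 0) atTop ↔
      IntegralDivergesAtZero (logDerivDensity φ) (u r) := by
  have hI : Ioo 0 a ∈ 𝓝[>] (0 : ℝ) := Ioo_mem_nhdsGT (hr.1.trans hr.2)
  refine tendsto_iff_of_eventuallyEq_comp
    (tendsto_nhdsGT_zero_of_rightInvOn (hr.1.trans hr.2) hmono hpos hφu hu)
    (tendsto_nhdsWithin_iff.2 ⟨hlim, mem_of_superset hI hpos⟩)
    (mem_of_superset hI fun t ht => huφ ht) ?_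
  filter_upwards [Ioo_mem_nhdsGT hr.1] with ε hε using
    integral_div_deriv_div_sq_eq_integral_logDerivDensity hmono hdiff hφu huφ hu hu' hε.1 hε.2.le
      hr.2

end Substitution

theorem stmt5_general
    (t₀ r₀ : ℝ) (ht₀1 : t₀ < 1)
    (hr₀ : 0 < r₀) (hr₀t₀ : r₀ < t₀)
    (φ u : ℝ → ℝ)
    (hpos : ∀ t ∈ Ioo 0 t₀, 0 < φ t ∧ φ t < 1)
    (hmono : StrictMonoOn φ (Ioo 0 t₀))
    (hdiff : ∀ t ∈ Ioo 0 t₀, DifferentiableAt ℝ φ t)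
    (hlim : Tendsto φ (nhdsWithin 0 (Ioi 0)) (nhds 0))
    (hreg : MonotoneOn
        (fun t => deriv φ t * t * Real.log t / (φ t * Real.log (φ t)))
        (Ioo 0 t₀) ∨
      AntitoneOn
        (fun t => deriv φ t * t * Real.log t / (φ t * Real.log (φ t)))
        (Ioo 0 t₀))
    (hu_inv : ∀ t ∈ Ioo 0 t₀, φ (u t) = t ∧ u (φ t) = t ∧ u t ∈ Ioo 0 t₀)
    (hu_deriv_pos : ∀ t ∈ Ioo 0 t₀, 0 < deriv u t) :
    Tendsto (fun ε => ∫ t in ε..r₀, (u t / deriv u t) / t ^ 2)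
        (nhdsWithin 0 (Ioi 0)) atTop
      ↔ Tendsto (fun ε => ∫ t in ε..r₀, |Real.log (φ t) / Real.log t| ^ 2 / t)
          (nhdsWithin 0 (Ioi 0)) atTop := by
  have hr₀I : r₀ ∈ Ioo 0 t₀ := ⟨hr₀, hr₀t₀⟩
  have hu : MapsTo u (Ioo 0 t₀) (Ioo 0 t₀) := fun t ht => (hu_inv t ht).2.2
  rw [tendsto_integral_div_deriv_div_sq_iff hr₀I (fun t ht => (hpos t ht).1) hmono.monotoneOn
    hdiff hlim (fun t ht => (hu_inv t ht).1) (fun t ht => (hu_inv t ht).2.1) hu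
    fun t ht => (hu_deriv_pos t ht).ne']
  exact integralDivergesAtZero_logDerivDensity_iff ht₀1.le hpos hmono.monotoneOn hdiff hreg
    (hu hr₀I) hr₀I

/-- For `n = 2`, the condition `∫₀ (u(t)/u'(t)) dt/t² = ∞` with
`u = φ⁻¹` is equivalent to the Jones–Makarov condition
`∫₀ |log φ(t)/log t|² dt/t = ∞`, for any weight function `φ` which is
increasing, differentiable, doubling, and such that
`φ'(t) t log t/(φ(t) log φ(t))` is monotone. -/
theorem stmt5
    (t₀ β r₀ : ℝ) (ht₀ : 0 < t₀) (ht₀1 : t₀ < 1) (hβ : 1 < β)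
    (hr₀ : 0 < r₀) (hr₀t₀ : r₀ < t₀)
    (φ u : ℝ → ℝ)
    (hpos : ∀ t ∈ Ioo 0 t₀, 0 < φ t ∧ φ t < 1)
    (hmono : StrictMonoOn φ (Ioo 0 t₀))
    (hdiff : ∀ t ∈ Ioo 0 t₀, DifferentiableAt ℝ φ t)
    (hlim : Tendsto φ (nhdsWithin 0 (Ioi 0)) (nhds 0))
    (hdoub : ∀ᶠ t in nhdsWithin 0 (Ioi 0), φ (2 * t) ≤ β * φ t)
    (hreg : MonotoneOn
        (fun t => deriv φ t * t * Real.log t / (φ t * Real.log (φ t)))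
        (Ioo 0 t₀) ∨
      AntitoneOn
        (fun t => deriv φ t * t * Real.log t / (φ t * Real.log (φ t)))
        (Ioo 0 t₀))
    (hu_inv : ∀ t ∈ Ioo 0 t₀, φ (u t) = t ∧ u (φ t) = t ∧ u t ∈ Ioo 0 t₀)
    (hu_diff : ∀ t ∈ Ioo 0 t₀, DifferentiableAt ℝ u t)
    (hu_deriv_pos : ∀ t ∈ Ioo 0 t₀, 0 < deriv u t) :
    Tendsto (fun ε => ∫ t in ε..r₀, (u t / deriv u t) / t ^ 2)
        (nhdsWithin 0 (Ioi 0)) atTop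
      ↔ Tendsto (fun ε => ∫ t in ε..r₀, |Real.log (φ t) / Real.log t| ^ 2 / t)
          (nhdsWithin 0 (Ioi 0)) atTop :=
  stmt5_general t₀ r₀ ht₀1 hr₀ hr₀t₀ φ u hpos hmono hdiff hlim hreg hu_inv hu_deriv_pos
end

section
/- Let E ⊂ ℝⁿ be compact and suppose E is weakly mean porous with parameters α, λ satisfying: λ(k)·α(2^{-k})ⁿ/2^{-kn} is non-increasing in k and Σ_{k≥j₀} λ(k)·α(2^{-k})ⁿ/2^{-kn} = ∞. Then m_n(E) = 0. -/
open Filter Set Real Metric MeasureTheory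

/-- A (closed) cube in `ℝⁿ`. -/
def IsCube {n : ℕ} (Q : Set (EuclideanSpace ℝ (Fin n))) : Prop :=
  ∃ (z : EuclideanSpace ℝ (Fin n)) (r : ℝ), 0 < r ∧
    Q = {y | ∀ i, |y i - z i| ≤ r}

/-- The dyadic annulus `A_k(x) = {y : 2^{-k} < |x - y| < 2^{-k+1}}`. -/
def annulus {n : ℕ} (x : EuclideanSpace ℝ (Fin n)) (k : ℕ) :
    Set (EuclideanSpace ℝ (Fin n)) :=
  {y | (2:ℝ) ^ (-(k:ℝ)) < dist x y ∧ dist x y < (2:ℝ) ^ (-(k:ℝ) + 1)}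

/-- `χ_k^𝒬(x) = 1`: there are `λ k` cubes of `𝒬` inside `A_k(x)`, each of
diameter at least `α(2^{-k})`. -/
def GoodAnnulus {n : ℕ} (𝒬 : Set (Set (EuclideanSpace ℝ (Fin n))))
    (α : ℝ → ℝ) (lam : ℕ → ℕ) (x : EuclideanSpace ℝ (Fin n)) (k : ℕ) : Prop :=
  ∃ F : Finset (Set (EuclideanSpace ℝ (Fin n))), ↑F ⊆ 𝒬 ∧ F.card = lam k ∧
    ∀ Q ∈ F, Q ⊆ annulus x k ∧ α ((2:ℝ) ^ (-(k:ℝ))) ≤ Metric.diam Q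

open scoped Classical in
/-- `S_j^𝒬(x) = Σ_{k=1}^j χ_k^𝒬(x)`. -/
noncomputable def porositySum {n : ℕ}
    (𝒬 : Set (Set (EuclideanSpace ℝ (Fin n)))) (α : ℝ → ℝ) (lam : ℕ → ℕ)
    (x : EuclideanSpace ℝ (Fin n)) (j : ℕ) : ℕ :=
  ∑ k ∈ Finset.Icc 1 j, if GoodAnnulus 𝒬 α lam x k then 1 else 0

/-- `E` is weakly mean porous with parameters `α` and `λ`. -/
def WeaklyMeanPorous {n : ℕ} (E : Set (EuclideanSpace ℝ (Fin n)))
    (α : ℝ → ℝ) (lam : ℕ → ℕ) : Prop :=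
  ∃ (𝒬 : Set (Set (EuclideanSpace ℝ (Fin n)))) (j₀ : ℕ),
    (∀ Q ∈ 𝒬, IsCube Q ∧ Q ∩ E = ∅) ∧
    (∀ Q ∈ 𝒬, ∀ Q' ∈ 𝒬, Q ≠ Q' → Q ∩ Q' = ∅) ∧
    ∀ x ∈ E, ∀ j ≥ j₀, (j : ℝ) / 2 < (porositySum 𝒬 α lam x j : ℝ)

open scoped ENNReal Topology

/-! Integrate over `E` the weighted count `∑ₖ λ(k) (α(2⁻ᵏ)/2⁻ᵏ)ⁿ χₖ(x)`. The weights are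
non-increasing and, beyond `j₀`, more than half of the `χₖ(x)` equal one, so Abel summation bounds
the count from below by half of the divergent partial sums of the weights. From above, a cube `Q`
seen from `x` at scale `k` lies within `2·2⁻ᵏ` of `x`, so the count is dominated by the sum over
`Q` and over the scales with `α(2⁻ᵏ) ≤ diam Q` of `(α(2⁻ᵏ)/2⁻ᵏ)ⁿ` times the indicator of a ball of
radius `2·2⁻ᵏ` at a point of `Q`. Each such term has integral `≍ α(2⁻ᵏ)ⁿ`, and since `α(2⁻ᵏ)` at
least halves from one scale to the next, the terms of one cube add up to `≲ (diam Q)ⁿ ≲ m(Q)`.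
The relevant cubes are disjoint and lie in the bounded set `thickening 1 E`, so the integral is
bounded independently of the number of scales, which forces `m(E) = 0`. -/

theorem Antitone.mul_sum_range_le_sum_range_mul {f c : ℕ → ℝ} (hf : Antitone f)
    (hc : ∀ k, 0 ≤ ∑ i ∈ Finset.range k, c i) (j : ℕ) :
    f j * ∑ i ∈ Finset.range j, c i ≤ ∑ i ∈ Finset.range j, f i * c i := by
  induction j with
  | zero => simp
  | succ j ih =>
    rw [Finset.sum_range_succ, Finset.sum_range_succ]
    calc f (j + 1) * (∑ i ∈ Finset.range j, c i + c j)
        ≤ f j * (∑ i ∈ Finset.range j, c i + c j) :=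
          mul_le_mul_of_nonneg_right (hf j.le_succ)
            (by simpa [Finset.sum_range_succ] using hc (j + 1))
      _ ≤ ∑ i ∈ Finset.range j, f i * c i + f j * c j := by linarith

theorem Antitone.sum_range_mul_le_sum_range_mul {f a b : ℕ → ℝ} (hf : Antitone f)
    (hf₀ : ∀ k, 0 ≤ f k)
    (hab : ∀ k, ∑ i ∈ Finset.range k, a i ≤ ∑ i ∈ Finset.range k, b i) (j : ℕ) :
    ∑ i ∈ Finset.range j, f i * a i ≤ ∑ i ∈ Finset.range j, f i * b i := by
  have h := hf.mul_sum_range_le_sum_range_mul (c := b - a)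
    (fun k => by simpa [Finset.sum_sub_distrib] using hab k) j
  have h₀ : 0 ≤ f j * ∑ i ∈ Finset.range j, (b - a) i :=
    mul_nonneg (hf₀ j) (by simpa [Finset.sum_sub_distrib] using hab j)
  simp only [Pi.sub_apply, mul_sub, Finset.sum_sub_distrib] at h h₀
  linarith

theorem half_sum_Ico_le_sum_range_mul {f b : ℕ → ℝ} {m : ℕ} (hf : Antitone f)
    (hf₀ : ∀ k, 0 ≤ f k) (hb₀ : ∀ k, 0 ≤ b k)
    (hb : ∀ k, m ≤ k → (k : ℝ) / 2 ≤ ∑ i ∈ Finset.range k, b i) (j : ℕ) :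
    (∑ i ∈ Finset.Ico m j, f i) / 2 ≤ ∑ i ∈ Finset.range j, f i * b i := by
  let a : ℕ → ℝ := fun i => if m ≤ i then 1 / 2 else 0
  have hab : ∀ k, ∑ i ∈ Finset.range k, a i ≤ ∑ i ∈ Finset.range k, b i := by
    intro k
    rcases le_total m k with hmk | hkm
    · calc ∑ i ∈ Finset.range k, a i ≤ ∑ i ∈ Finset.range k, (1 / 2 : ℝ) :=
            Finset.sum_le_sum fun i _ => by simp only [a]; split_ifs <;> norm_num
        _ = (k : ℝ) / 2 := by simp [div_eq_mul_inv]
        _ ≤ _ := hb k hmk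
    · rw [Finset.sum_eq_zero fun i hi => if_neg (by rw [Finset.mem_range] at hi; omega)]
      exact Finset.sum_nonneg fun i _ => hb₀ i
  calc (∑ i ∈ Finset.Ico m j, f i) / 2 = ∑ i ∈ Finset.range j, f i * a i := by
        simp only [a, mul_ite, mul_zero, ← Finset.sum_filter, Finset.sum_div]
        refine Finset.sum_congr ?_ fun _ _ => by ring
        ext i
        simp only [Finset.mem_Ico, Finset.mem_filter, Finset.mem_range]
        omega
    _ ≤ _ := hf.sum_range_mul_le_sum_range_mul hf₀ hab j

theorem tendsto_sum_Ico_succ_atTop {f : ℕ → ℝ}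
    (hf : Tendsto (fun j => ∑ k ∈ Finset.range j, f k) atTop atTop) (m : ℕ) :
    Tendsto (fun j => ∑ k ∈ Finset.Ico m j, f (k + 1)) atTop atTop := by
  have hshift : Tendsto (fun j => ∑ k ∈ Finset.range j, f (k + 1)) atTop atTop := by
    simpa [Finset.sum_range_succ'] using
      tendsto_atTop_add_const_right _ (-f 0) (hf.comp (tendsto_add_atTop_nat 1))
  refine (tendsto_atTop_add_const_right _ (-∑ k ∈ Finset.range m, f (k + 1)) hshift).congr' ?_
  filter_upwards [eventually_ge_atTop m] with j hj
  rw [Finset.sum_Ico_eq_sub _ hj, sub_eq_add_neg]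

theorem sum_le_two_mul_of_halving {g : ℕ → ℝ} {s : Finset ℕ} {D : ℝ} (hD : 0 ≤ D)
    (hg : ∀ k ∈ s, ∀ m, g (k + m) ≤ g k / 2 ^ m) (hs : ∀ k ∈ s, g k ≤ D) :
    ∑ k ∈ s, g k ≤ 2 * D := by
  rcases s.eq_empty_or_nonempty with rfl | hne
  · simpa using hD
  set F := s.min' hne
  have hF : ∀ k ∈ s, F ≤ k := fun k hk => s.min'_le k hk
  calc ∑ k ∈ s, g k ≤ ∑ k ∈ s, D * (1 / 2) ^ (k - F) := by
        refine Finset.sum_le_sum fun k hk => ?_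
        have := hg F (s.min'_mem hne) (k - F)
        rw [Nat.add_sub_cancel' (hF k hk)] at this
        calc g k ≤ g F / 2 ^ (k - F) := this
          _ ≤ D / 2 ^ (k - F) := by gcongr; exact hs F (s.min'_mem hne)
          _ = D * (1 / 2) ^ (k - F) := by rw [one_div_pow, mul_one_div]
    _ = D * ∑ m ∈ s.image (· - F), (1 / 2 : ℝ) ^ m := by
        rw [Finset.mul_sum, Finset.sum_image fun k hk l hl h => by
          have := hF k hk; have := hF l hl; omega]
    _ ≤ D * 2 := by
        gcongr
        exact (Summable.sum_le_tsum _ (fun _ _ => by positivity) summable_geometric_two).trans_eq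
          tsum_geometric_two
    _ = 2 * D := mul_comm _ _

theorem ENNReal.eq_zero_of_forall_ofReal_mul_le {L : ℕ → ℝ} (hL : Tendsto L atTop atTop)
    {a C : ℝ≥0∞} (hC : C ≠ ⊤) (h : ∀ j, ENNReal.ofReal (L j) * a ≤ C) : a = 0 := by
  by_contra ha
  have hlim : Tendsto (fun j => ENNReal.ofReal (L j) * a) atTop (𝓝 ⊤) := by
    simpa [ENNReal.top_mul ha] using ENNReal.Tendsto.mul_const (b := a)
      (ENNReal.tendsto_ofReal_atTop.comp hL) (Or.inl ENNReal.top_ne_zero)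
  obtain ⟨j, hj⟩ := (hlim.eventually (lt_mem_nhds hC.lt_top)).exists
  exact (h j).not_gt hj

section Cube

variable {n : ℕ}

def cube (z : EuclideanSpace ℝ (Fin n)) (r : ℝ) : Set (EuclideanSpace ℝ (Fin n)) :=
  {y | ∀ i, |y i - z i| ≤ r}

theorem ball_subset_cube (z : EuclideanSpace ℝ (Fin n)) (r : ℝ) : ball z r ⊆ cube z r := by
  intro y hy i
  have h := PiLp.norm_apply_le (y - z) i
  rw [mem_ball, dist_eq_norm] at hy
  simp only [PiLp.sub_apply, Real.norm_eq_abs] at h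
  linarith

theorem isClosed_cube (z : EuclideanSpace ℝ (Fin n)) (r : ℝ) : IsClosed (cube z r) := by
  simp only [cube, Set.ofPred_forall]
  exact isClosed_iInter fun i => isClosed_le (by fun_prop) continuous_const

theorem diam_cube_le (z : EuclideanSpace ℝ (Fin n)) {r : ℝ} (hr : 0 ≤ r) :
    diam (cube z r) ≤ 2 * r * √n := by
  refine diam_le_of_forall_dist_le (by positivity) fun y hy y' hy' => ?_
  have hcoord : ∀ i, dist (y i) (y' i) ^ 2 ≤ (2 * r) ^ 2 := fun i => by
    have h := abs_sub_le (y i) (z i) (y' i)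
    rw [abs_sub_comm (z i)] at h
    rw [Real.dist_eq]
    exact pow_le_pow_left₀ (abs_nonneg _) (by linarith [hy i, hy' i]) 2
  calc dist y y' = √(∑ i, dist (y i) (y' i) ^ 2) := EuclideanSpace.dist_eq y y'
    _ ≤ √(∑ _i : Fin n, (2 * r) ^ 2) := Real.sqrt_le_sqrt (Finset.sum_le_sum fun i _ => hcoord i)
    _ = 2 * r * √n := by
        rw [Finset.sum_const, Finset.card_univ, Fintype.card_fin, nsmul_eq_mul,
          Real.sqrt_mul' _ (sq_nonneg _), Real.sqrt_sq (by positivity), mul_comm]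

namespace IsCube

variable {Q : Set (EuclideanSpace ℝ (Fin n))}

theorem measurableSet (hQ : IsCube Q) : MeasurableSet Q := by
  obtain ⟨z, r, -, rfl⟩ := hQ
  exact (isClosed_cube z r).measurableSet

theorem interior_nonempty (hQ : IsCube Q) : (interior Q).Nonempty := by
  obtain ⟨z, r, hr, rfl⟩ := hQ
  exact ⟨z, interior_maximal (ball_subset_cube z r) isOpen_ball (mem_ball_self hr)⟩

theorem nonempty (hQ : IsCube Q) : Q.Nonempty :=
  hQ.interior_nonempty.mono interior_subset

theorem ofReal_diam_pow_mul_volume_ball_le (hQ : IsCube Q) :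
    ENNReal.ofReal (diam Q ^ n) * volume (ball (0 : EuclideanSpace ℝ (Fin n)) 1)
      ≤ ENNReal.ofReal ((2 * √n) ^ n) * volume Q := by
  obtain ⟨z, r, hr, rfl⟩ := hQ
  calc ENNReal.ofReal (diam (cube z r) ^ n) * volume (ball (0 : EuclideanSpace ℝ (Fin n)) 1)
      ≤ ENNReal.ofReal ((2 * √n) ^ n * r ^ n) * volume (ball (0 : EuclideanSpace ℝ (Fin n)) 1) := by
        rw [← mul_pow]
        gcongr
        linarith [diam_cube_le z hr.le]
    _ = ENNReal.ofReal ((2 * √n) ^ n) * volume (ball z r) := by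
        rw [ENNReal.ofReal_mul (by positivity), mul_assoc, Measure.addHaar_ball_of_pos _ _ hr,
          finrank_euclideanSpace_fin]
    _ ≤ ENNReal.ofReal ((2 * √n) ^ n) * volume (cube z r) := by
        gcongr
        exact ball_subset_cube z r

end IsCube

end Cube

theorem two_rpow_neg_natCast_succ_add (k m : ℕ) :
    (2 : ℝ) ^ (-((k + m + 1 : ℕ) : ℝ)) = 2 ^ (-((k + 1 : ℕ) : ℝ)) / 2 ^ m := by
  rw [show k + m + 1 = (k + 1) + m by omega, Nat.cast_add, neg_add, Real.rpow_add two_pos,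
    Real.rpow_neg two_pos.le (m : ℝ), Real.rpow_natCast, div_eq_mul_inv]

theorem two_rpow_neg_natCast_succ_mem_Ioo (k : ℕ) :
    (2 : ℝ) ^ (-((k + 1 : ℕ) : ℝ)) ∈ Ioo 0 1 :=
  ⟨by positivity, Real.rpow_lt_one_of_one_lt_of_neg one_lt_two (neg_lt_zero.2 (by positivity))⟩

theorem two_rpow_neg_natCast_add_one (k : ℕ) :
    (2 : ℝ) ^ (-(k : ℝ) + 1) = 2 * 2 ^ (-(k : ℝ)) := by
  rw [Real.rpow_add_one two_ne_zero, mul_comm]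

theorem annulus_subset_ball {n : ℕ} (x : EuclideanSpace ℝ (Fin n)) (k : ℕ) :
    annulus x k ⊆ ball x (2 * 2 ^ (-(k : ℝ))) := fun y hy => by
  rw [mem_ball, dist_comm, ← two_rpow_neg_natCast_add_one]
  exact hy.2

theorem two_mul_two_rpow_neg_natCast_le_one {k : ℕ} (hk : 1 ≤ k) :
    2 * (2 : ℝ) ^ (-(k : ℝ)) ≤ 1 := by
  rw [← two_rpow_neg_natCast_add_one]
  exact Real.rpow_le_one_of_one_le_of_nonpos one_le_two
    (by linarith [(Nat.one_le_cast (α := ℝ)).2 hk])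

noncomputable def porosityWeight (n : ℕ) (α : ℝ → ℝ) (lam : ℕ → ℕ) (k : ℕ) : ℝ :=
  (lam k : ℝ) * α ((2 : ℝ) ^ (-(k : ℝ))) ^ n / ((2 : ℝ) ^ (-(k : ℝ))) ^ n

section Porosity

variable {n : ℕ} {α : ℝ → ℝ}

theorem apply_two_rpow_neg_le_div_two_pow (hα_mono : MonotoneOn (fun t => α t / t) (Ioo 0 1))
    (k m : ℕ) :
    α (2 ^ (-((k + m + 1 : ℕ) : ℝ))) ≤ α (2 ^ (-((k + 1 : ℕ) : ℝ))) / 2 ^ m := by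
  have ht := two_rpow_neg_natCast_succ_mem_Ioo k
  have hs := two_rpow_neg_natCast_succ_mem_Ioo (k + m)
  rw [two_rpow_neg_natCast_succ_add] at hs ⊢
  set t : ℝ := 2 ^ (-((k + 1 : ℕ) : ℝ))
  have h := hα_mono hs ht (div_le_self ht.1.le (one_le_pow₀ one_le_two))
  calc α (t / 2 ^ m) = α (t / 2 ^ m) / (t / 2 ^ m) * (t / 2 ^ m) :=
        (div_mul_cancel₀ _ hs.1.ne').symm
    _ ≤ α t / t * (t / 2 ^ m) := mul_le_mul_of_nonneg_right h hs.1.le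
    _ = α t / 2 ^ m := by field_simp [ht.1.ne']

noncomputable def cubeWeight (α : ℝ → ℝ) (k : ℕ) (Q : Set (EuclideanSpace ℝ (Fin n)))
    (p : EuclideanSpace ℝ (Fin n)) : EuclideanSpace ℝ (Fin n) → ℝ≥0∞ :=
  if α (2 ^ (-(k : ℝ))) ≤ diam Q then
    (ball p (2 * 2 ^ (-(k : ℝ)))).indicator
      fun _ => ENNReal.ofReal ((α (2 ^ (-(k : ℝ))) / 2 ^ (-(k : ℝ))) ^ n)
  else 0

theorem measurable_cubeWeight (k : ℕ) (Q : Set (EuclideanSpace ℝ (Fin n)))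
    (p : EuclideanSpace ℝ (Fin n)) : Measurable (cubeWeight α k Q p) := by
  unfold cubeWeight
  split_ifs
  · exact measurable_const.indicator measurableSet_ball
  · exact measurable_const

theorem lintegral_cubeWeight {k : ℕ} (hα : 0 < α (2 ^ (-(k : ℝ))))
    (Q : Set (EuclideanSpace ℝ (Fin n))) (p : EuclideanSpace ℝ (Fin n)) :
    ∫⁻ x, cubeWeight α k Q p x = if α (2 ^ (-(k : ℝ))) ≤ diam Q then
      ENNReal.ofReal ((2 * α (2 ^ (-(k : ℝ)))) ^ n) * volume (ball (0 : EuclideanSpace ℝ (Fin n)) 1)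
      else 0 := by
  unfold cubeWeight
  split_ifs
  · have ht : (0 : ℝ) < 2 ^ (-(k : ℝ)) := by positivity
    rw [lintegral_indicator_const measurableSet_ball,
      Measure.addHaar_ball_of_pos _ _ (by positivity),
      finrank_euclideanSpace_fin, ← mul_assoc, ← ENNReal.ofReal_mul (by positivity), ← mul_pow]
    congr 3
    field_simp
  · simp

theorem sum_lintegral_cubeWeight_le (hn : 1 ≤ n)
    (hα_maps : ∀ t ∈ Ioo (0 : ℝ) 1, α t ∈ Ioo (0 : ℝ) 1)
    (hα_mono : MonotoneOn (fun t => α t / t) (Ioo 0 1))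
    {Q : Set (EuclideanSpace ℝ (Fin n))} (hQ : IsCube Q) (p : EuclideanSpace ℝ (Fin n)) (j : ℕ) :
    ∑ k ∈ Finset.range j, ∫⁻ x, cubeWeight α (k + 1) Q p x
      ≤ ENNReal.ofReal (2 * 2 ^ n * (2 * √n) ^ n) * volume Q := by
  set g : ℕ → ℝ := fun k => α (2 ^ (-((k + 1 : ℕ) : ℝ)))
  have hg : ∀ k, 0 < g k := fun k => (hα_maps _ (two_rpow_neg_natCast_succ_mem_Ioo k)).1
  have hhalf : ∀ k m, (2 * g (k + m)) ^ n ≤ (2 * g k) ^ n / 2 ^ m := fun k m => calc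
    (2 * g (k + m)) ^ n ≤ ((2 * g k) / 2 ^ m) ^ n := by
        gcongr
        · exact (mul_pos two_pos (hg _)).le
        · rw [mul_div_assoc]
          exact mul_le_mul_of_nonneg_left (apply_two_rpow_neg_le_div_two_pow hα_mono k m)
            zero_le_two
    _ = (2 * g k) ^ n / (2 ^ m) ^ n := div_pow _ _ _
    _ ≤ (2 * g k) ^ n / 2 ^ m := by
        gcongr
        · exact (pow_pos (mul_pos two_pos (hg k)) n).le
        · exact le_self_pow₀ (one_le_pow₀ one_le_two) (by omega)
  have hwindow : ∑ k ∈ (Finset.range j).filter (fun k => g k ≤ diam Q), (2 * g k) ^ n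
      ≤ 2 * (2 * diam Q) ^ n :=
    sum_le_two_mul_of_halving (by positivity) (fun k _ m => hhalf k m)
      fun k hk => by gcongr; exact (mul_pos two_pos (hg k)).le; exact (Finset.mem_filter.1 hk).2
  rw [Finset.sum_congr rfl fun k _ => lintegral_cubeWeight (hg k) Q p, ← Finset.sum_filter,
    ← Finset.sum_mul,
    ← ENNReal.ofReal_sum_of_nonneg fun k _ => (pow_pos (mul_pos two_pos (hg k)) n).le]
  calc ENNReal.ofReal (∑ k ∈ (Finset.range j).filter (fun k => g k ≤ diam Q), (2 * g k) ^ n)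
        * volume (ball (0 : EuclideanSpace ℝ (Fin n)) 1)
      ≤ ENNReal.ofReal (2 * 2 ^ n) * (ENNReal.ofReal (diam Q ^ n)
        * volume (ball (0 : EuclideanSpace ℝ (Fin n)) 1)) := by
        rw [← mul_assoc, ← ENNReal.ofReal_mul (by positivity), mul_assoc, ← mul_pow]
        gcongr
    _ ≤ ENNReal.ofReal (2 * 2 ^ n) * (ENNReal.ofReal ((2 * √n) ^ n) * volume Q) :=
        mul_le_mul_right hQ.ofReal_diam_pow_mul_volume_ball_le _
    _ = ENNReal.ofReal (2 * 2 ^ n * (2 * √n) ^ n) * volume Q := by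
        rw [← mul_assoc, ← ENNReal.ofReal_mul (by positivity)]

theorem ofReal_le_tsum_cubeWeight {lam : ℕ → ℕ} {𝒬 𝒞 : Set (Set (EuclideanSpace ℝ (Fin n)))}
    {x : EuclideanSpace ℝ (Fin n)} {k : ℕ} (hk : 1 ≤ k)
    (h𝒞 : ∀ Q ∈ 𝒬, Q ⊆ ball x 1 → Q ∈ 𝒞)
    {p : Set (EuclideanSpace ℝ (Fin n)) → EuclideanSpace ℝ (Fin n)}
    (hp : ∀ Q ∈ 𝒞, p Q ∈ Q) (hgood : GoodAnnulus 𝒬 α lam x k) :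
    ENNReal.ofReal (porosityWeight n α lam k) ≤ ∑' Q : 𝒞, cubeWeight α k Q (p Q) x := by
  obtain ⟨F, hF𝒬, hFcard, hF⟩ := hgood
  have hF𝒞 : ∀ Q ∈ F, Q ∈ 𝒞 := fun Q hQ => h𝒞 Q (hF𝒬 hQ) fun y hy =>
    ball_subset_ball (two_mul_two_rpow_neg_natCast_le_one hk)
      (annulus_subset_ball x k ((hF Q hQ).1 hy))
  have hweight : ∀ Q ∈ F, cubeWeight α k Q (p Q) x
      = ENNReal.ofReal ((α (2 ^ (-(k : ℝ))) / 2 ^ (-(k : ℝ))) ^ n) := fun Q hQ => by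
    rw [cubeWeight, if_pos (hF Q hQ).2, indicator_of_mem]
    rw [mem_ball_comm]
    exact annulus_subset_ball x k ((hF Q hQ).1 (hp Q (hF𝒞 Q hQ)))
  calc ENNReal.ofReal (porosityWeight n α lam k)
      = ∑ Q ∈ F, ENNReal.ofReal ((α (2 ^ (-(k : ℝ))) / 2 ^ (-(k : ℝ))) ^ n) := by
        rw [Finset.sum_const, hFcard, nsmul_eq_mul, porosityWeight, mul_div_assoc, ← div_pow,
          ENNReal.ofReal_mul (Nat.cast_nonneg _), ENNReal.ofReal_natCast]
    _ = ∑ Q ∈ F, 𝒞.indicator (fun Q => cubeWeight α k Q (p Q) x) Q :=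
        Finset.sum_congr rfl fun Q hQ => by rw [indicator_of_mem (hF𝒞 Q hQ), hweight Q hQ]
    _ ≤ ∑' Q, 𝒞.indicator (fun Q => cubeWeight α k Q (p Q) x) Q := ENNReal.sum_le_tsum F
    _ = ∑' Q : 𝒞, cubeWeight α k Q (p Q) x := (tsum_subtype 𝒞 _).symm

theorem lintegral_tsum_sum_cubeWeight_le (hn : 1 ≤ n)
    (hα_maps : ∀ t ∈ Ioo (0 : ℝ) 1, α t ∈ Ioo (0 : ℝ) 1)
    (hα_mono : MonotoneOn (fun t => α t / t) (Ioo 0 1))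
    {𝒞 : Set (Set (EuclideanSpace ℝ (Fin n)))} (hcube : ∀ Q ∈ 𝒞, IsCube Q)
    (hdisj : 𝒞.PairwiseDisjoint id) (p : Set (EuclideanSpace ℝ (Fin n)) → EuclideanSpace ℝ (Fin n))
    (j : ℕ) :
    ∫⁻ x, ∑' Q : 𝒞, ∑ k ∈ Finset.range j, cubeWeight α (k + 1) Q (p Q) x
      ≤ ENNReal.ofReal (2 * 2 ^ n * (2 * √n) ^ n) * volume (⋃₀ 𝒞) := by
  have hcount : 𝒞.Countable :=
    hdisj.countable_of_nonempty_interior fun Q hQ => (hcube Q hQ).interior_nonempty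
  have := hcount.to_subtype
  rw [lintegral_tsum fun Q =>
      (Finset.measurable_sum _ fun k _ => measurable_cubeWeight _ _ _).aemeasurable,
    measure_sUnion hcount hdisj fun Q hQ => (hcube Q hQ).measurableSet, ← ENNReal.tsum_mul_left]
  refine ENNReal.tsum_le_tsum fun Q => ?_
  rw [lintegral_finsetSum _ fun k _ => measurable_cubeWeight _ _ _]
  exact sum_lintegral_cubeWeight_le hn hα_maps hα_mono (hcube Q Q.2) _ j

open scoped Classical in
theorem porositySum_eq_sum_range {lam : ℕ → ℕ} (𝒬 : Set (Set (EuclideanSpace ℝ (Fin n))))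
    (x : EuclideanSpace ℝ (Fin n)) (k : ℕ) :
    (porositySum 𝒬 α lam x k : ℝ)
      = ∑ i ∈ Finset.range k, if GoodAnnulus 𝒬 α lam x (i + 1) then 1 else 0 := by
  rw [porositySum, Finset.range_eq_Ico,
    Finset.sum_Ico_add' (fun i => if GoodAnnulus 𝒬 α lam x i then (1 : ℝ) else 0), zero_add,
    Finset.Ico_add_one_right_eq_Icc]
  push_cast
  rfl

theorem ofReal_half_sum_Ico_le_tsum_sum_cubeWeight
    (hα_maps : ∀ t ∈ Ioo (0 : ℝ) 1, α t ∈ Ioo (0 : ℝ) 1) {lam : ℕ → ℕ}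
    (hf : Antitone (porosityWeight n α lam)) {𝒬 𝒞 : Set (Set (EuclideanSpace ℝ (Fin n)))}
    {x : EuclideanSpace ℝ (Fin n)} (h𝒞 : ∀ Q ∈ 𝒬, Q ⊆ ball x 1 → Q ∈ 𝒞)
    {p : Set (EuclideanSpace ℝ (Fin n)) → EuclideanSpace ℝ (Fin n)} (hp : ∀ Q ∈ 𝒞, p Q ∈ Q)
    {j₀ : ℕ} (hpor : ∀ j ≥ j₀, (j : ℝ) / 2 < (porositySum 𝒬 α lam x j : ℝ)) (j : ℕ) :
    ENNReal.ofReal ((∑ k ∈ Finset.Ico j₀ j, porosityWeight n α lam (k + 1)) / 2)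
      ≤ ∑' Q : 𝒞, ∑ k ∈ Finset.range j, cubeWeight α (k + 1) Q (p Q) x := by
  classical
  set b : ℕ → ℝ := fun i => if GoodAnnulus 𝒬 α lam x (i + 1) then 1 else 0
  have hb₀ : ∀ i, 0 ≤ b i := fun i => by simp only [b]; split_ifs <;> norm_num
  have hb : ∀ k, j₀ ≤ k → (k : ℝ) / 2 ≤ ∑ i ∈ Finset.range k, b i := fun k hk =>
    porositySum_eq_sum_range 𝒬 x k ▸ (hpor k hk).le
  have hweight : ∀ k, 0 ≤ porosityWeight n α lam (k + 1) := fun k => by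
    have := (hα_maps _ (two_rpow_neg_natCast_succ_mem_Ioo k)).1
    unfold porosityWeight
    positivity
  calc ENNReal.ofReal ((∑ k ∈ Finset.Ico j₀ j, porosityWeight n α lam (k + 1)) / 2)
      ≤ ENNReal.ofReal (∑ k ∈ Finset.range j, porosityWeight n α lam (k + 1) * b k) :=
        ENNReal.ofReal_le_ofReal (half_sum_Ico_le_sum_range_mul
          (fun _ _ h => hf (Nat.succ_le_succ h)) hweight hb₀ hb j)
    _ = ∑ k ∈ Finset.range j, ENNReal.ofReal (porosityWeight n α lam (k + 1) * b k) :=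
        ENNReal.ofReal_sum_of_nonneg fun k _ => mul_nonneg (hweight k) (hb₀ k)
    _ ≤ ∑ k ∈ Finset.range j, ∑' Q : 𝒞, cubeWeight α (k + 1) Q (p Q) x := by
        refine Finset.sum_le_sum fun k _ => ?_
        by_cases hgood : GoodAnnulus 𝒬 α lam x (k + 1)
        · simpa [b, hgood] using ofReal_le_tsum_cubeWeight (by omega) h𝒞 hp hgood
        · simp [b, hgood]
    _ = ∑' Q : 𝒞, ∑ k ∈ Finset.range j, cubeWeight α (k + 1) Q (p Q) x :=
        (Summable.tsum_finsetSum fun _ _ => ENNReal.summable).symm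

theorem ofReal_half_sum_Ico_mul_volume_le (hn : 1 ≤ n)
    (hα_maps : ∀ t ∈ Ioo (0 : ℝ) 1, α t ∈ Ioo (0 : ℝ) 1)
    (hα_mono : MonotoneOn (fun t => α t / t) (Ioo 0 1)) {lam : ℕ → ℕ}
    (hf : Antitone (porosityWeight n α lam)) {E : Set (EuclideanSpace ℝ (Fin n))}
    (hE : MeasurableSet E) {𝒬 : Set (Set (EuclideanSpace ℝ (Fin n)))} {j₀ : ℕ}
    (hcube : ∀ Q ∈ 𝒬, IsCube Q) (hdisj : ∀ Q ∈ 𝒬, ∀ Q' ∈ 𝒬, Q ≠ Q' → Q ∩ Q' = ∅)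
    (hpor : ∀ x ∈ E, ∀ j ≥ j₀, (j : ℝ) / 2 < (porositySum 𝒬 α lam x j : ℝ)) (j : ℕ) :
    ENNReal.ofReal ((∑ k ∈ Finset.Ico j₀ j, porosityWeight n α lam (k + 1)) / 2) * volume E
      ≤ ENNReal.ofReal (2 * 2 ^ n * (2 * √n) ^ n) * volume (thickening 1 E) := by
  set 𝒞 := {Q | Q ∈ 𝒬 ∧ Q ⊆ thickening 1 E}
  choose! p hp using fun Q (hQ : Q ∈ 𝒞) => (hcube Q hQ.1).nonempty
  have h𝒞 : 𝒞.PairwiseDisjoint id := fun Q hQ Q' hQ' hne =>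
    Set.disjoint_iff_inter_eq_empty.2 (hdisj Q hQ.1 Q' hQ'.1 hne)
  calc ENNReal.ofReal ((∑ k ∈ Finset.Ico j₀ j, porosityWeight n α lam (k + 1)) / 2) * volume E
      = ∫⁻ _ in E, ENNReal.ofReal ((∑ k ∈ Finset.Ico j₀ j, porosityWeight n α lam (k + 1)) / 2) :=
        (setLIntegral_const _ _).symm
    _ ≤ ∫⁻ x in E, ∑' Q : 𝒞, ∑ k ∈ Finset.range j, cubeWeight α (k + 1) Q (p Q) x :=
        setLIntegral_mono' hE fun x hx =>
          ofReal_half_sum_Ico_le_tsum_sum_cubeWeight hα_maps hf (𝒞 := 𝒞)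
          (fun Q hQ hsub => ⟨hQ, hsub.trans (ball_subset_thickening hx 1)⟩) hp (hpor x hx) j
    _ ≤ ∫⁻ x, ∑' Q : 𝒞, ∑ k ∈ Finset.range j, cubeWeight α (k + 1) Q (p Q) x :=
        setLIntegral_le_lintegral _ _
    _ ≤ ENNReal.ofReal (2 * 2 ^ n * (2 * √n) ^ n) * volume (⋃₀ 𝒞) :=
        lintegral_tsum_sum_cubeWeight_le hn hα_maps hα_mono (fun Q hQ => hcube Q hQ.1) h𝒞 p j
    _ ≤ ENNReal.ofReal (2 * 2 ^ n * (2 * √n) ^ n) * volume (thickening 1 E) := by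
        gcongr
        exact sUnion_subset fun Q hQ => hQ.2

end Porosity

theorem stmt13_general (n : ℕ) (hn : 2 ≤ n)
    (E : Set (EuclideanSpace ℝ (Fin n))) (hE : IsCompact E)
    (α : ℝ → ℝ) (lam : ℕ → ℕ)
    (hα_maps : ∀ t ∈ Ioo (0:ℝ) 1, α t ∈ Ioo (0:ℝ) 1)
    (hα_mono : MonotoneOn (fun t => α t / t) (Ioo 0 1))
    (hporous : WeaklyMeanPorous E α lam)
    (hmonot : Antitone (fun k : ℕ =>
      (lam k : ℝ) * α ((2:ℝ) ^ (-(k:ℝ))) ^ n / ((2:ℝ) ^ (-(k:ℝ))) ^ n))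
    (hdiv : Tendsto (fun j : ℕ => ∑ k ∈ Finset.range j,
        (lam k : ℝ) * α ((2:ℝ) ^ (-(k:ℝ))) ^ n / ((2:ℝ) ^ (-(k:ℝ))) ^ n)
      atTop atTop) :
    volume E = 0 := by
  obtain ⟨𝒬, j₀, h𝒬, hdisj, hpor⟩ := hporous
  exact ENNReal.eq_zero_of_forall_ofReal_mul_le
    ((tendsto_sum_Ico_succ_atTop hdiv j₀).atTop_div_const two_pos)
    (ENNReal.mul_ne_top ENNReal.ofReal_ne_top hE.isBounded.thickening.measure_lt_top.ne)
    (ofReal_half_sum_Ico_mul_volume_le (by omega) hα_maps hα_mono hmonot hE.isClosed.measurableSet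
      (fun Q hQ => (h𝒬 Q hQ).1) hdisj hpor)

/-- Let `E ⊂ ℝⁿ` be compact and weakly mean porous with
parameters `α, λ` such that `λ(k) α(2^{-k})ⁿ / 2^{-kn}` is non-increasing in `k`
and `Σ_{k ≥ j₀} λ(k) α(2^{-k})ⁿ / 2^{-kn} = ∞`. Then `m_n(E) = 0`. -/
theorem stmt13 (n : ℕ) (hn : 2 ≤ n)
    (E : Set (EuclideanSpace ℝ (Fin n))) (hE : IsCompact E)
    (α : ℝ → ℝ) (lam : ℕ → ℕ)
    (hα_maps : ∀ t ∈ Ioo (0:ℝ) 1, α t ∈ Ioo (0:ℝ) 1)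
    (hα_cont : ContinuousOn α (Ioo 0 1))
    (hα_mono : MonotoneOn (fun t => α t / t) (Ioo 0 1))
    (hporous : WeaklyMeanPorous E α lam)
    (hmonot : Antitone (fun k : ℕ =>
      (lam k : ℝ) * α ((2:ℝ) ^ (-(k:ℝ))) ^ n / ((2:ℝ) ^ (-(k:ℝ))) ^ n))
    (hdiv : Tendsto (fun j : ℕ => ∑ k ∈ Finset.range j,
        (lam k : ℝ) * α ((2:ℝ) ^ (-(k:ℝ))) ^ n / ((2:ℝ) ^ (-(k:ℝ))) ^ n)
      atTop atTop) :
    volume E = 0 :=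
  stmt13_general n hn E hE α lam hα_maps hα_mono hporous hmonot hdiv
end

section
/- Let u ∈ L¹(𝔹ⁿ) be non-negative and let φ be a doubling increasing weight function (φ(2r) ≤ β φ(r)). Then the set E of points ξ ∈ ∂𝔹ⁿ for which limsup_{r→0} (1/φ(r))·∫_{B(ξ,r)∩𝔹ⁿ} u dm_n > 0 has Λ_φ(E) = 0; i.e., for Λ_φ-almost every ξ ∈ ∂𝔹ⁿ, ∫_{B(ξ,r)∩𝔹ⁿ} u dm_n = o(φ(r)) as r → 0. -/
open Filter Set Real Metric MeasureTheory
open scoped ENNReal Topology NNReal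

/-- The generalized Hausdorff measure `Λ_φ` with gauge `φ`. -/
noncomputable def gaugeMeasure {X : Type*} [EMetricSpace X] [MeasurableSpace X]
    [BorelSpace X] (φ : ℝ → ℝ) : Measure X :=
  Measure.mkMetric (fun d => ENNReal.ofReal (φ d.toReal))

lemma key_frostman {n : ℕ} (hn : 2 ≤ n) {β : ℝ} (hβ : 1 < β) {φ : ℝ → ℝ}
    (hφpos : ∀ r > (0:ℝ), 0 < φ r)
    (hφmono : MonotoneOn φ (Ioi 0))
    (hφdoub : ∀ r > (0:ℝ), φ (2 * r) ≤ β * φ r)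
    (ν : Measure (EuclideanSpace ℝ (Fin n)))
    (hνfin : ν univ ≠ ⊤)
    (hνnull : ν (Metric.ball 0 1)ᶜ = 0)
    (c : ℝ≥0∞) (hc : c ≠ ⊤)
    (E : Set (EuclideanSpace ℝ (Fin n)))
    (hE : ∀ ξ ∈ E, ξ ∈ Metric.sphere (0 : EuclideanSpace ℝ (Fin n)) 1 ∧
      ∀ δ > (0:ℝ), ∃ r, 0 < r ∧ r < δ ∧ ENNReal.ofReal (φ r) ≤ c * ν (Metric.ball ξ r)) :
    Measure.mkMetric (fun d => ENNReal.ofReal (φ d.toReal)) E = 0 := by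
  classical
  have hβ0 : (0:ℝ) < β := lt_trans zero_lt_one hβ
  haveI : Nontrivial (EuclideanSpace ℝ (Fin n)) := by
    refine ⟨EuclideanSpace.single (⟨0, by omega⟩ : Fin n) (1:ℝ), (0 : EuclideanSpace ℝ (Fin n)), fun h => (one_ne_zero : (1:ℝ) ≠ 0) ?_⟩
    calc (1:ℝ) = ‖EuclideanSpace.single (⟨0, by omega⟩ : Fin n) (1:ℝ)‖ := by simp
      _ = ‖(0 : EuclideanSpace ℝ (Fin n))‖ := by rw [h]
      _ = 0 := norm_zero
  set δ : ℕ → ℝ := fun j => 1 / (j + 1) with hδdef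
  have hδpos : ∀ j : ℕ, 0 < δ j := fun j => by positivity
  have H : ∀ j : ℕ, ∀ ξ, ξ ∈ E → ∃ r, 0 < r ∧ r < δ j ∧
      ENNReal.ofReal (φ r) ≤ c * ν (Metric.ball ξ r) :=
    fun j ξ hξ => (hE ξ hξ).2 (δ j) (hδpos j)
  choose! ρ hρ0 hρδ hρb using H
  have V : ∀ j : ℕ, ∃ S, S ⊆ E ∧
      (S.PairwiseDisjoint fun a => Metric.closedBall a (ρ j a)) ∧
      ∀ a ∈ E, ∃ b ∈ S, Metric.closedBall a (ρ j a) ⊆ Metric.closedBall b (4 * ρ j b) := by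
    intro j
    obtain ⟨S, hS1, hS2, hS3⟩ :=
      Vitali.exists_disjoint_subfamily_covering_enlargement_closedBall E id (ρ j) (δ j)
        (fun a ha => (hρδ j a ha).le) 4 (by norm_num)
    exact ⟨S, hS1, hS2, hS3⟩
  choose S hSE hSdisj hScov using V
  have hScnt : ∀ j, (S j).Countable := by
    intro j
    refine (hSdisj j).countable_of_nonempty_interior (fun b hb => ?_)
    exact ⟨b, ball_subset_interior_closedBall (mem_ball_self (hρ0 j b (hSE j hb)))⟩
  haveI : ∀ j : ℕ, Countable (S j) := fun j => (hScnt j).to_subtype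
  have hcov : ∀ j : ℕ, E ⊆ ⋃ i : S j, Metric.closedBall (i : EuclideanSpace ℝ (Fin n)) (4 * ρ j i) := by
    intro j a ha
    obtain ⟨b, hb, hsub⟩ := hScov j a ha
    exact mem_iUnion.2 ⟨⟨b, hb⟩, hsub (mem_closedBall_self (hρ0 j a ha).le)⟩
  have hδ0 : Tendsto (fun j : ℕ => (8:ℝ) * δ j) atTop (𝓝 0) := by
    have h8 := tendsto_one_div_add_atTop_nhds_zero_nat.const_mul (8:ℝ)
    simp only [hδdef]
    simpa [one_div] using h8
  have hr : Tendsto (fun j : ℕ => ENNReal.ofReal (8 * δ j)) atTop (𝓝 0) := by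
    have := ENNReal.tendsto_ofReal hδ0
    simpa using this
  have ht : ∀ᶠ j in atTop, ∀ i : S j,
      EMetric.diam (Metric.closedBall (i : EuclideanSpace ℝ (Fin n)) (4 * ρ j i)) ≤ ENNReal.ofReal (8 * δ j) := by
    refine Eventually.of_forall (fun j i => ?_)
    refine EMetric.diam_le (fun x hx y hy => ?_)
    rw [edist_dist]
    refine ENNReal.ofReal_le_ofReal ?_
    have hxi : dist x (i : EuclideanSpace ℝ (Fin n)) ≤ 4 * ρ j i := hx
    have hyi : dist y (i : EuclideanSpace ℝ (Fin n)) ≤ 4 * ρ j i := hy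
    have hρlt : ρ j i < δ j := hρδ j i (hSE j i.2)
    calc dist x y ≤ dist x (i : EuclideanSpace ℝ (Fin n)) + dist y (i : EuclideanSpace ℝ (Fin n)) := dist_triangle_right _ _ _
      _ ≤ 8 * δ j := by linarith
  have main := Measure.mkMetric_le_liminf_tsum (X := EuclideanSpace ℝ (Fin n)) E
    (fun j => ENNReal.ofReal (8 * δ j)) hr
    (fun j (i : S j) => Metric.closedBall (i : EuclideanSpace ℝ (Fin n)) (4 * ρ j i)) ht
    (Eventually.of_forall hcov) (fun d => ENNReal.ofReal (φ d.toReal))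
  -- annulus
  set A : ℕ → Set (EuclideanSpace ℝ (Fin n)) := fun j => Metric.ball 0 1 \ Metric.closedBall 0 (1 - δ j) with hAdef
  have hAmeas : ∀ j, MeasurableSet (A j) :=
    fun j => measurableSet_ball.diff measurableSet_closedBall
  have hAanti : Antitone A := by
    intro j j' hjj' x hx
    have hδle : δ j' ≤ δ j := by
      apply one_div_le_one_div_of_le (by positivity)
      exact_mod_cast by exact_mod_cast add_le_add_left (Nat.cast_le.2 hjj') 1
    exact ⟨hx.1, fun hx2 => hx.2 (mem_closedBall.2 (le_trans (mem_closedBall.1 hx2) (by linarith)))⟩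
  have hAempty : ⋂ j, A j = ∅ := by
    rw [eq_empty_iff_forall_notMem]
    intro x hx
    have hx0 := mem_iInter.1 hx 0
    have hlt : dist x 0 < 1 := hx0.1
    obtain ⟨j, hj⟩ := exists_nat_one_div_lt (sub_pos.2 hlt)
    have hxj := mem_iInter.1 hx j
    exact hxj.2 (mem_closedBall.2 (by simp only [hδdef]; linarith))
  have hA0 : Tendsto (fun j => ν (A j)) atTop (𝓝 0) := by
    have := tendsto_measure_iInter_atTop (μ := ν)
      (fun j => (hAmeas j).nullMeasurableSet) hAanti
      ⟨0, ne_top_of_le_ne_top hνfin (measure_mono (subset_univ _))⟩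
    rw [hAempty, measure_empty] at this
    exact this
  -- term bound
  have hterm : ∀ j : ℕ,
      (∑' i : S j, ENNReal.ofReal (φ (EMetric.diam
        (Metric.closedBall (i : EuclideanSpace ℝ (Fin n)) (4 * ρ j i))).toReal))
        ≤ ENNReal.ofReal (β ^ 3) * c * ν (A j) := by
    intro j
    have hpt : ∀ i : S j,
        ENNReal.ofReal (φ (EMetric.diam (Metric.closedBall (i : EuclideanSpace ℝ (Fin n)) (4 * ρ j i))).toReal)
          ≤ ENNReal.ofReal (β ^ 3) * c *
            ν (Metric.closedBall (i : EuclideanSpace ℝ (Fin n)) (ρ j i) ∩ Metric.ball 0 1) := by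
      intro i
      have hbE : (i : EuclideanSpace ℝ (Fin n)) ∈ E := hSE j i.2
      have hρpos : 0 < ρ j i := hρ0 j i hbE
      have hρbd : ENNReal.ofReal (φ (ρ j i)) ≤ c * ν (Metric.ball (i : EuclideanSpace ℝ (Fin n)) (ρ j i)) :=
        hρb j i hbE
      set d := Metric.diam (Metric.closedBall (i : EuclideanSpace ℝ (Fin n)) (4 * ρ j i)) with hd
      have hdle : d ≤ 8 * ρ j i := by
        have := Metric.diam_closedBall (x := (i : EuclideanSpace ℝ (Fin n))) (r := 4 * ρ j i) (by positivity)
        linarith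
      have hdpos : 0 < d := by
        obtain ⟨v, hv⟩ := exists_norm_eq (EuclideanSpace ℝ (Fin n)) (le_of_lt (by positivity : (0:ℝ) < 4 * ρ j i))
        have hmem : (i : EuclideanSpace ℝ (Fin n)) + v ∈ Metric.closedBall (i : EuclideanSpace ℝ (Fin n)) (4 * ρ j i) := by
          simp [dist_eq_norm, hv]
        have := Metric.dist_le_diam_of_mem isBounded_closedBall hmem
          (mem_closedBall_self (by positivity))
        rw [dist_eq_norm] at this
        simp only [add_sub_cancel_left] at this
        rw [hv] at this
        linarith
      have hφd : φ d ≤ φ (8 * ρ j i) :=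
        hφmono (mem_Ioi.2 hdpos) (mem_Ioi.2 (by positivity)) hdle
      have hdoub3 : φ (8 * ρ j i) ≤ β ^ 3 * φ (ρ j i) := by
        have h1 : φ (2 * ρ j i) ≤ β * φ (ρ j i) := hφdoub _ hρpos
        have h2 : φ (2 * (2 * ρ j i)) ≤ β * φ (2 * ρ j i) := hφdoub _ (by positivity)
        have h3 : φ (2 * (2 * (2 * ρ j i))) ≤ β * φ (2 * (2 * ρ j i)) := hφdoub _ (by positivity)
        have he : (8:ℝ) * ρ j i = 2 * (2 * (2 * ρ j i)) := by ring
        rw [he]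
        calc φ (2 * (2 * (2 * ρ j i))) ≤ β * φ (2 * (2 * ρ j i)) := h3
          _ ≤ β * (β * φ (2 * ρ j i)) := mul_le_mul_of_nonneg_left h2 hβ0.le
          _ ≤ β * (β * (β * φ (ρ j i))) :=
              mul_le_mul_of_nonneg_left (mul_le_mul_of_nonneg_left h1 hβ0.le) hβ0.le
          _ = β ^ 3 * φ (ρ j i) := by ring
      have hνle : ν (Metric.ball (i : EuclideanSpace ℝ (Fin n)) (ρ j i)) ≤
          ν (Metric.closedBall (i : EuclideanSpace ℝ (Fin n)) (ρ j i) ∩ Metric.ball 0 1) := by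
        have hsub : Metric.ball (i : EuclideanSpace ℝ (Fin n)) (ρ j i) ⊆
            (Metric.closedBall (i : EuclideanSpace ℝ (Fin n)) (ρ j i) ∩ Metric.ball 0 1) ∪ (Metric.ball (0:EuclideanSpace ℝ (Fin n)) 1)ᶜ := by
          intro x hx
          by_cases hx1 : x ∈ Metric.ball (0:EuclideanSpace ℝ (Fin n)) 1
          · exact Or.inl ⟨ball_subset_closedBall hx, hx1⟩
          · exact Or.inr hx1
        calc ν (Metric.ball (i : EuclideanSpace ℝ (Fin n)) (ρ j i))
            ≤ ν ((Metric.closedBall (i : EuclideanSpace ℝ (Fin n)) (ρ j i) ∩ Metric.ball 0 1) ∪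
                (Metric.ball (0:EuclideanSpace ℝ (Fin n)) 1)ᶜ) := measure_mono hsub
          _ ≤ ν (Metric.closedBall (i : EuclideanSpace ℝ (Fin n)) (ρ j i) ∩ Metric.ball 0 1) +
                ν (Metric.ball (0:EuclideanSpace ℝ (Fin n)) 1)ᶜ := measure_union_le _ _
          _ = ν (Metric.closedBall (i : EuclideanSpace ℝ (Fin n)) (ρ j i) ∩ Metric.ball 0 1) := by
              rw [hνnull, add_zero]
      have hstep1 : ENNReal.ofReal (φ d) ≤ ENNReal.ofReal (β ^ 3) * ENNReal.ofReal (φ (ρ j i)) := by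
        rw [← ENNReal.ofReal_mul (by positivity)]
        exact ENNReal.ofReal_le_ofReal (le_trans hφd hdoub3)
      calc ENNReal.ofReal (φ (EMetric.diam (Metric.closedBall (i : EuclideanSpace ℝ (Fin n)) (4 * ρ j i))).toReal)
          = ENNReal.ofReal (φ d) := rfl
        _ ≤ ENNReal.ofReal (β ^ 3) * ENNReal.ofReal (φ (ρ j i)) := hstep1
        _ ≤ ENNReal.ofReal (β ^ 3) * (c * ν (Metric.ball (i : EuclideanSpace ℝ (Fin n)) (ρ j i))) :=
            mul_le_mul_right hρbd _
        _ ≤ ENNReal.ofReal (β ^ 3) * (c * ν (Metric.closedBall (i : EuclideanSpace ℝ (Fin n)) (ρ j i) ∩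
              Metric.ball 0 1)) := mul_le_mul_right (mul_le_mul_right hνle _) _
        _ = ENNReal.ofReal (β ^ 3) * c * ν (Metric.closedBall (i : EuclideanSpace ℝ (Fin n)) (ρ j i) ∩
              Metric.ball 0 1) := by rw [mul_assoc]
    have hdisj : (S j).PairwiseDisjoint
        (fun a => Metric.closedBall a (ρ j a) ∩ Metric.ball 0 1) :=
      (hSdisj j).mono (fun a => inter_subset_left)
    have hUsub : (⋃ i ∈ S j, Metric.closedBall i (ρ j i) ∩ Metric.ball 0 1) ⊆ A j := by
      rintro x hx
      simp only [mem_iUnion, exists_prop] at hx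
      obtain ⟨b, hbS, hxcb, hx01⟩ := hx
      have hbE : b ∈ E := hSE j hbS
      have hbs : dist b (0:EuclideanSpace ℝ (Fin n)) = 1 := mem_sphere.mp (hE b hbE).1
      refine ⟨hx01, fun hx2 => ?_⟩
      have h1 : dist x b ≤ ρ j b := mem_closedBall.1 hxcb
      have h2 : dist x 0 ≤ 1 - δ j := mem_closedBall.1 hx2
      have h3 : ρ j b < δ j := hρδ j b hbE
      have h4 : dist b (0:EuclideanSpace ℝ (Fin n)) ≤ dist b x + dist x 0 := dist_triangle _ _ _
      rw [dist_comm b x] at h4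
      linarith [hbs ▸ h4]
    calc (∑' i : S j, ENNReal.ofReal (φ (EMetric.diam
            (Metric.closedBall (i : EuclideanSpace ℝ (Fin n)) (4 * ρ j i))).toReal))
        ≤ ∑' i : S j, ENNReal.ofReal (β ^ 3) * c *
            ν (Metric.closedBall (i : EuclideanSpace ℝ (Fin n)) (ρ j i) ∩ Metric.ball 0 1) :=
          ENNReal.tsum_le_tsum hpt
      _ = ENNReal.ofReal (β ^ 3) * c *
            ∑' i : S j, ν (Metric.closedBall (i : EuclideanSpace ℝ (Fin n)) (ρ j i) ∩ Metric.ball 0 1) := by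
          rw [ENNReal.tsum_mul_left]
      _ = ENNReal.ofReal (β ^ 3) * c *
            ν (⋃ i ∈ S j, Metric.closedBall i (ρ j i) ∩ Metric.ball 0 1) := by
          rw [measure_biUnion (hScnt j) hdisj
            (fun b _ => measurableSet_closedBall.inter measurableSet_ball)]
      _ ≤ ENNReal.ofReal (β ^ 3) * c * ν (A j) := mul_le_mul_right (measure_mono hUsub) _
  have hGlim : Tendsto (fun j => ENNReal.ofReal (β ^ 3) * c * ν (A j)) atTop (𝓝 0) := by
    have := ENNReal.Tendsto.const_mul (a := ENNReal.ofReal (β ^ 3) * c) hA0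
      (Or.inr (ENNReal.mul_ne_top ENNReal.ofReal_ne_top hc))
    simpa using this
  refine le_antisymm ?_ zero_le'
  refine le_trans main ?_
  have hlim : liminf (fun j => ∑' i : S j, ENNReal.ofReal (φ (EMetric.diam
      (Metric.closedBall (i : EuclideanSpace ℝ (Fin n)) (4 * ρ j i))).toReal)) atTop ≤
      liminf (fun j => ENNReal.ofReal (β ^ 3) * c * ν (A j)) atTop :=
    liminf_le_liminf (Eventually.of_forall hterm)
  calc liminf (fun j => ∑' i : S j, ENNReal.ofReal (φ (EMetric.diam
        (Metric.closedBall (i : EuclideanSpace ℝ (Fin n)) (4 * ρ j i))).toReal)) atTop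
      ≤ liminf (fun j => ENNReal.ofReal (β ^ 3) * c * ν (A j)) atTop := hlim
    _ = 0 := hGlim.liminf_eq

/-- Let `u ∈ L¹(𝔹ⁿ)` be non-negative and let `φ` be a doubling
increasing weight function. Then for `Λ_φ`-almost every `ξ ∈ ∂𝔹ⁿ`,
`∫_{B(ξ,r) ∩ 𝔹ⁿ} u dm_n = o(φ(r))` as `r → 0`; that is, the exceptional set
`E` of points where this fails satisfies `Λ_φ(E) = 0`. -/
theorem stmt15 (n : ℕ) (hn : 2 ≤ n) (β : ℝ) (hβ : 1 < β)
    (φ : ℝ → ℝ)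
    (hφpos : ∀ r > (0:ℝ), 0 < φ r)
    (hφmono : MonotoneOn φ (Ioi 0))
    (hφcont : ContinuousOn φ (Ioi 0))
    (hφlim : Tendsto φ (nhdsWithin 0 (Ioi 0)) (nhds 0))
    (hφdoub : ∀ r > (0:ℝ), φ (2 * r) ≤ β * φ r)
    (u : EuclideanSpace ℝ (Fin n) → ℝ)
    (hu_nonneg : ∀ x, 0 ≤ u x)
    (hu_int : IntegrableOn u (Metric.ball 0 1) volume) :
    gaugeMeasure φ
      {ξ ∈ Metric.sphere (0 : EuclideanSpace ℝ (Fin n)) 1 |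
        ¬ Tendsto
          (fun r => (∫ x in Metric.ball ξ r ∩ Metric.ball 0 1, u x) / φ r)
          (nhdsWithin 0 (Ioi 0)) (nhds 0)} = 0 := by
  classical
  set ν : Measure (EuclideanSpace ℝ (Fin n)) :=
    (volume.restrict (Metric.ball 0 1)).withDensity (fun x => ENNReal.ofReal (u x)) with hνdef
  have hν1 : ∀ s : Set (EuclideanSpace ℝ (Fin n)), MeasurableSet s →
      ν s = ENNReal.ofReal (∫ x in s ∩ Metric.ball 0 1, u x) := by
    intro s hs
    rw [hνdef, withDensity_apply _ hs, Measure.restrict_restrict hs,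
      ofReal_integral_eq_lintegral_ofReal (hu_int.mono_set inter_subset_right)
        (Eventually.of_forall (fun x => hu_nonneg x))]
  have hνnull : ν (Metric.ball (0:EuclideanSpace ℝ (Fin n)) 1)ᶜ = 0 := by
    rw [hν1 _ measurableSet_ball.compl]
    rw [compl_inter_self, setIntegral_empty]
    simp
  have hνfin : ν univ ≠ ⊤ := by
    rw [hν1 _ MeasurableSet.univ]
    exact ENNReal.ofReal_ne_top
  -- decompose the exceptional set
  set Ek : ℕ → Set (EuclideanSpace ℝ (Fin n)) := fun k =>
    {ξ | ξ ∈ Metric.sphere (0 : EuclideanSpace ℝ (Fin n)) 1 ∧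
      ∀ δ > (0:ℝ), ∃ r, 0 < r ∧ r < δ ∧
        ENNReal.ofReal (φ r) ≤ ENNReal.ofReal (k + 1) * ν (Metric.ball ξ r)} with hEkdef
  have hsub : {ξ ∈ Metric.sphere (0 : EuclideanSpace ℝ (Fin n)) 1 |
        ¬ Tendsto
          (fun r => (∫ x in Metric.ball ξ r ∩ Metric.ball 0 1, u x) / φ r)
          (nhdsWithin 0 (Ioi 0)) (nhds 0)} ⊆ ⋃ k : ℕ, Ek k := by
    rintro ξ ⟨hξs, hξnt⟩
    set f : ℝ → ℝ := fun r => (∫ x in Metric.ball ξ r ∩ Metric.ball 0 1, u x) / φ r with hfdef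
    have hfnn : ∀ r ∈ Ioi (0:ℝ), 0 ≤ f r := by
      intro r hr
      apply div_nonneg _ (hφpos r hr).le
      exact setIntegral_nonneg (measurableSet_ball.inter measurableSet_ball)
        (fun x _ => hu_nonneg x)
    have hfreq : ∃ k : ℕ, ∃ᶠ r in nhdsWithin 0 (Ioi 0), 1 / (k + 1 : ℝ) ≤ f r := by
      by_contra hcon
      push_neg at hcon
      apply hξnt
      rw [tendsto_order]
      constructor
      · intro a ha
        filter_upwards [self_mem_nhdsWithin] with r hr
        exact lt_of_lt_of_le ha (hfnn r hr)
      · intro a ha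
        obtain ⟨k, hk⟩ := exists_nat_one_div_lt ha
        have := hcon k
        try rw [not_frequently] at this
        filter_upwards [this] with r hr
        try rw [not_le] at hr
        exact hr.trans hk
    obtain ⟨k, hk⟩ := hfreq
    refine mem_iUnion.2 ⟨k, hξs, fun δ hδ => ?_⟩
    obtain ⟨r, h1, hr0, hrδ⟩ :=
      (hk.and_eventually (Ioo_mem_nhdsGT hδ)).exists
    refine ⟨r, hr0, hrδ, ?_⟩
    have hφr : 0 < φ r := hφpos r hr0
    have hkpos : (0:ℝ) < k + 1 := by positivity
    have hI : φ r ≤ (k + 1) * ∫ x in Metric.ball ξ r ∩ Metric.ball 0 1, u x := by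
      rw [hfdef] at h1
      simp only at h1
      rw [le_div_iff₀ hφr] at h1
      have h2 := mul_le_mul_of_nonneg_left h1 hkpos.le
      have h3 : (k + 1 : ℝ) * (1 / (k + 1) * φ r) = φ r := by field_simp
      linarith
    calc ENNReal.ofReal (φ r)
        ≤ ENNReal.ofReal ((k + 1) * ∫ x in Metric.ball ξ r ∩ Metric.ball 0 1, u x) :=
          ENNReal.ofReal_le_ofReal hI
      _ = ENNReal.ofReal (k + 1) *
            ENNReal.ofReal (∫ x in Metric.ball ξ r ∩ Metric.ball 0 1, u x) :=
          ENNReal.ofReal_mul hkpos.le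
      _ = ENNReal.ofReal (k + 1) * ν (Metric.ball ξ r) := by
          rw [hν1 _ measurableSet_ball]
  refine measure_mono_null hsub ?_
  refine measure_iUnion_null (fun k => ?_)
  exact key_frostman hn hβ hφpos hφmono hφdoub ν hνfin hνnull
    (ENNReal.ofReal (k + 1)) ENNReal.ofReal_ne_top (Ek k) (fun ξ hξ => hξ)
end

section
/- Let n ≥ 2, s = n/(n-1), c > 0, and let χ be a function with 0 ≤ χ_k ≤ 1. Fix φ(t) = exp(-(c log(1/t))^{1/s}), u = φ⁻¹. If a sequence (χ_k)_{k≥i₀} of indicator values satisfies Σ_{k=i₀}^{i}(1−χ_k)·2^{-k}u'(2^{-k})/u(2^{-k}) ≤ A·log(1/u(2^{-i})) for all large i, where A is small enough depending on n and c, then liminf_{i→∞} (1/i)·Σ_{k=i₀}^i χ_k ≥ 1/2. -/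
open Filter Set Real

/-!
The hypothesis pins `u` down on `(0, 1)`: `u t = exp (-(log (1/t))^s / c)`. At the dyadic scale
`t = 2^{-k}` the weight `t u'(t) / u(t)` is therefore `(s/c) (k log 2)^{s-1}`, and
`log (1 / u (2^{-i})) = (i log 2)^s / c`. The `b` bad indices are distinct positive integers, so at
least half of them are `≥ b/2` and their weights add up to at least `(s/c) (log 2)^{s-1} (b/2)^s`.
Against the bound `A (i log 2)^s / c` this forces `b ≤ i/4` once `A ≤ s / (8^s log 2)`, and then
for `i ≥ 4 i₀` at least `i/2` of the indices `i₀, …, i` are good.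
-/

lemma card_div_two_rpow_le_sum_rpow_sub_one {s : ℝ} (hs : 1 ≤ s) {B : Finset ℕ} (hB : 0 ∉ B) :
    ((B.card : ℝ) / 2) ^ s ≤ ∑ k ∈ B, (k : ℝ) ^ (s - 1) := by
  set C := B.filter (fun k => B.card ≤ 2 * k)
  have hsmall : (B.filter (fun k => ¬ B.card ≤ 2 * k)).card ≤ (B.card - 1) / 2 :=
    calc _ ≤ (Finset.Icc 1 ((B.card - 1) / 2)).card := Finset.card_le_card fun k hk => by
            simp only [Finset.mem_filter, Finset.mem_Icc] at hk ⊢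
            have : k ≠ 0 := fun h => hB (h ▸ hk.1)
            omega
      _ = (B.card - 1) / 2 := by simp
  have hC : (B.card : ℝ) / 2 ≤ C.card := by
    have : C.card + (B.filter fun k => ¬ B.card ≤ 2 * k).card = B.card :=
      Finset.card_filter_add_card_filter_not _
    rw [div_le_iff₀ two_pos]
    exact_mod_cast (by omega : B.card ≤ C.card * 2)
  have hpow : ∀ k ∈ C, ((B.card : ℝ) / 2) ^ (s - 1) ≤ (k : ℝ) ^ (s - 1) := fun k hk => by
    have hk : B.card ≤ 2 * k := (Finset.mem_filter.1 hk).2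
    refine rpow_le_rpow (by positivity) ?_ (by linarith)
    rw [div_le_iff₀ two_pos]
    exact_mod_cast (by omega : B.card ≤ k * 2)
  calc ((B.card : ℝ) / 2) ^ s = (B.card / 2) * ((B.card : ℝ) / 2) ^ (s - 1) := by
        rw [← rpow_one_add' (by positivity) (by linarith), add_sub_cancel]
    _ ≤ C.card * ((B.card : ℝ) / 2) ^ (s - 1) := by gcongr
    _ ≤ ∑ k ∈ C, (k : ℝ) ^ (s - 1) := by simpa using C.card_nsmul_le_sum _ _ hpow
    _ ≤ ∑ k ∈ B, (k : ℝ) ^ (s - 1) :=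
        Finset.sum_le_sum_of_subset_of_nonneg (Finset.filter_subset _ _) fun _ _ _ => by
          positivity

lemma four_mul_card_le_of_sum_rpow_sub_one_le {s : ℝ} (hs : 1 ≤ s) {B : Finset ℕ} (hB : 0 ∉ B)
    {N : ℕ} (h : ∑ k ∈ B, (k : ℝ) ^ (s - 1) ≤ ((N : ℝ) / 8) ^ s) : 4 * B.card ≤ N := by
  have h' := (card_div_two_rpow_le_sum_rpow_sub_one hs hB).trans h
  rw [rpow_le_rpow_iff (by positivity) (by positivity) (by linarith)] at h'
  have : (4 * B.card : ℝ) ≤ N := by linarith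
  exact_mod_cast this

lemma sum_one_sub_mul_eq_sum_filter {ι : Type*} {χ w : ι → ℝ} (hχ : ∀ k, χ k = 0 ∨ χ k = 1)
    (S : Finset ι) : ∑ k ∈ S, (1 - χ k) * w k = ∑ k ∈ S.filter (χ · = 0), w k := by
  rw [Finset.sum_filter]
  refine Finset.sum_congr rfl fun k _ => ?_
  rcases hχ k with h | h <;> simp [h]

lemma half_le_liminf_of_four_mul_card_le {χ : ℕ → ℝ} (hχ : ∀ k, χ k = 0 ∨ χ k = 1) {i₀ : ℕ}
    (h : ∀ᶠ i in atTop, 4 * ((Finset.Icc i₀ i).filter (χ · = 0)).card ≤ i) :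
    1 / 2 ≤ liminf (fun i : ℕ => (∑ k ∈ Finset.Icc i₀ i, χ k) / i) atTop := by
  have hsum : ∀ i, ∑ k ∈ Finset.Icc i₀ i, χ k
      = (Finset.Icc i₀ i).card - ((Finset.Icc i₀ i).filter (χ · = 0)).card := fun i => by
    have := sum_one_sub_mul_eq_sum_filter (w := fun _ => 1) hχ (Finset.Icc i₀ i)
    simp only [mul_one, Finset.sum_sub_distrib, Finset.sum_const, nsmul_eq_mul] at this
    linarith
  refine le_liminf_of_le (isCoboundedUnder_ge_of_le atTop (x := 2) fun i => ?_) ?_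
  · rcases Nat.eq_zero_or_pos i with rfl | hi
    · simp
    rw [div_le_iff₀ (by exact_mod_cast hi), hsum, Nat.card_Icc]
    have : ((i + 1 - i₀ : ℕ) : ℝ) ≤ 2 * i := by exact_mod_cast (by omega : i + 1 - i₀ ≤ 2 * i)
    linarith [(Nat.cast_nonneg _ : (0 : ℝ) ≤ ((Finset.Icc i₀ i).filter (χ · = 0)).card)]
  · filter_upwards [h, eventually_ge_atTop (4 * i₀ + 1)] with i hbad hi
    rw [le_div_iff₀ (by exact_mod_cast (by omega : 0 < i)), hsum, Nat.card_Icc]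
    have : (i + 2 * ((Finset.Icc i₀ i).filter (χ · = 0)).card : ℝ) ≤ 2 * (i + 1 - i₀ : ℕ) := by
      exact_mod_cast (by omega)
    linarith

lemma eq_exp_neg_log_one_div_rpow_div {c s y t : ℝ} (hc : 0 < c) (hs : s ≠ 0) (hy : 0 < y)
    (hy1 : y ≤ 1) (h : exp (-(c * log (1 / y)) ^ (1 / s)) = t) :
    y = exp (-(log (1 / t) ^ s / c)) := by
  have hlog : log (1 / t) = (c * log (1 / y)) ^ (1 / s) := by
    rw [← h, one_div (exp _), log_inv, log_exp, neg_neg]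
  have hcy : 0 ≤ c * log (1 / y) := mul_nonneg hc.le (log_nonneg (one_le_one_div hy hy1))
  rw [hlog, ← rpow_mul hcy, one_div_mul_cancel hs, rpow_one, mul_div_cancel_left₀ _ hc.ne',
    one_div, log_inv, neg_neg, exp_log hy]

lemma mul_deriv_div_eq_of_eqOn {c s : ℝ} {u : ℝ → ℝ}
    (hu : EqOn u (fun t => exp (-(log (1 / t) ^ s / c))) (Ioo 0 1)) {t : ℝ} (ht : t ∈ Ioo 0 1) :
    t * deriv u t / u t = s * log (1 / t) ^ (s - 1) / c := by
  have hlog : 0 < log (1 / t) := log_pos (one_lt_one_div ht.1 ht.2)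
  have hlog' : HasDerivAt (fun x => log (1 / x)) (-t⁻¹) t := by
    have : (fun x => log (1 / x)) = fun x => -log x := funext fun x => by rw [one_div, log_inv]
    exact this ▸ (hasDerivAt_log ht.1.ne').neg
  have hd : HasDerivAt (fun x => exp (-(log (1 / x) ^ s / c))) _ t :=
    (((hlog'.rpow_const (p := s) (Or.inl hlog.ne')).div_const c).neg).exp
  rw [(hu.eventuallyEq_of_mem (Ioo_mem_nhds ht.1 ht.2)).deriv_eq, hd.deriv, hu ht, Pi.neg_apply]
  field_simp [ht.1.ne']

lemma two_rpow_neg_natCast_mem_Ioo {k : ℕ} (hk : k ≠ 0) : (2 : ℝ) ^ (-(k : ℝ)) ∈ Ioo 0 1 :=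
  ⟨by positivity, rpow_lt_one_of_one_lt_of_neg one_lt_two
    (neg_lt_zero.2 (Nat.cast_pos.2 (Nat.pos_of_ne_zero hk)))⟩

lemma log_one_div_two_rpow_neg_natCast (k : ℕ) : log (1 / (2 : ℝ) ^ (-(k : ℝ))) = k * log 2 := by
  rw [one_div, log_inv, log_rpow two_pos]
  ring

section Dyadic

variable {c s : ℝ} {u : ℝ → ℝ} (hu : EqOn u (fun t => exp (-(log (1 / t) ^ s / c))) (Ioo 0 1))
include hu

lemma two_rpow_neg_mul_deriv_div_eq_of_eqOn {k : ℕ} (hk : k ≠ 0) :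
    (2 : ℝ) ^ (-(k : ℝ)) * deriv u (2 ^ (-(k : ℝ))) / u (2 ^ (-(k : ℝ)))
      = s * log 2 ^ (s - 1) / c * (k : ℝ) ^ (s - 1) := by
  rw [mul_deriv_div_eq_of_eqOn hu (two_rpow_neg_natCast_mem_Ioo hk),
    log_one_div_two_rpow_neg_natCast, mul_rpow (Nat.cast_nonneg _) (log_pos one_lt_two).le]
  ring

lemma log_one_div_two_rpow_neg_eq_of_eqOn {i : ℕ} (hi : i ≠ 0) :
    log (1 / u (2 ^ (-(i : ℝ)))) = log 2 ^ s / c * (i : ℝ) ^ s := by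
  rw [hu (two_rpow_neg_natCast_mem_Ioo hi), one_div (exp _), log_inv, log_exp, neg_neg,
    log_one_div_two_rpow_neg_natCast, mul_rpow (Nat.cast_nonneg _) (log_pos one_lt_two).le]
  ring

end Dyadic

theorem stmt19_general
    (n : ℕ) (hn : 2 ≤ n) (c : ℝ) (hc : 0 < c)
    (s : ℝ) (hs : s = (n : ℝ) / (n - 1))
    (u : ℝ → ℝ)
    (hu_pos : ∀ t ∈ Ioo (0:ℝ) 1, 0 < u t ∧ u t < 1)
    (hu_inv : ∀ t ∈ Ioo (0:ℝ) 1,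
      Real.exp (-(c * Real.log (1 / u t)) ^ (1 / s)) = t)
    (i₀ : ℕ) (hi₀ : 1 ≤ i₀) :
    ∃ A₀ > (0:ℝ), ∀ A, 0 < A → A ≤ A₀ →
      ∀ χ : ℕ → ℝ, (∀ k, χ k = 0 ∨ χ k = 1) →
        (∀ᶠ i : ℕ in atTop,
          ∑ k ∈ Finset.Icc i₀ i, (1 - χ k) * ((2:ℝ) ^ (-(k:ℝ)) *
              deriv u ((2:ℝ) ^ (-(k:ℝ))) / u ((2:ℝ) ^ (-(k:ℝ))))
            ≤ A * Real.log (1 / u ((2:ℝ) ^ (-(i:ℝ))))) →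
        (1 : ℝ) / 2 ≤
          Filter.liminf (fun i : ℕ => (∑ k ∈ Finset.Icc i₀ i, χ k) / i)
            atTop := by
  have hs1 : 1 < s := by
    have : (2 : ℝ) ≤ n := by exact_mod_cast hn
    rw [hs, lt_div_iff₀ (by linarith)]
    linarith
  have hL : 0 < log 2 := log_pos one_lt_two
  have hu_eq : EqOn u (fun t => exp (-(log (1 / t) ^ s / c))) (Ioo 0 1) := fun t ht =>
    eq_exp_neg_log_one_div_rpow_div hc (by positivity) (hu_pos t ht).1 (hu_pos t ht).2.le
      (hu_inv t ht)
  refine ⟨s / (8 ^ s * log 2), by positivity, fun A _ hA χ hχ hsum => ?_⟩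
  refine half_le_liminf_of_four_mul_card_le hχ ?_
  filter_upwards [hsum, eventually_ge_atTop i₀] with i hi hi₀i
  have hB : 0 ∉ (Finset.Icc i₀ i).filter (χ · = 0) := by
    simp only [Finset.mem_filter, Finset.mem_Icc]
    omega
  rw [sum_one_sub_mul_eq_sum_filter hχ,
    Finset.sum_congr rfl fun k hk =>
      two_rpow_neg_mul_deriv_div_eq_of_eqOn hu_eq (by rintro rfl; exact hB hk),
    ← Finset.mul_sum, log_one_div_two_rpow_neg_eq_of_eqOn hu_eq (by omega)] at hi
  refine four_mul_card_le_of_sum_rpow_sub_one_le hs1.le hB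
    (le_of_mul_le_mul_left (hi.trans ?_) (by positivity : 0 < s * log 2 ^ (s - 1) / c))
  calc A * (log 2 ^ s / c * (i : ℝ) ^ s)
      ≤ s / (8 ^ s * log 2) * (log 2 ^ s / c * (i : ℝ) ^ s) := by gcongr
    _ = s * log 2 ^ (s - 1) / c * ((i : ℝ) / 8) ^ s := by
        rw [rpow_sub_one hL.ne', div_rpow (Nat.cast_nonneg _) (by norm_num)]
        field_simp

/-- Let `n ≥ 2`, `s = n/(n-1)`, `c > 0`,
`φ(t) = exp(-(c log(1/t))^{1/s})`, `u = φ⁻¹`. If a 0/1-sequence `(χ_k)_{k ≥ i₀}`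
satisfies `Σ_{k=i₀}^i (1-χ_k) 2^{-k} u'(2^{-k})/u(2^{-k}) ≤ A log(1/u(2^{-i}))`
for all large `i`, with `A` small enough (depending on `n` and `c`), then
`liminf_{i→∞} (1/i) Σ_{k=i₀}^i χ_k ≥ 1/2`. -/
theorem stmt19
    (n : ℕ) (hn : 2 ≤ n) (c : ℝ) (hc : 0 < c)
    (s : ℝ) (hs : s = (n : ℝ) / (n - 1))
    (u : ℝ → ℝ)
    (hu_pos : ∀ t ∈ Ioo (0:ℝ) 1, 0 < u t ∧ u t < 1)
    (hu_inv : ∀ t ∈ Ioo (0:ℝ) 1,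
      Real.exp (-(c * Real.log (1 / u t)) ^ (1 / s)) = t)
    (hu_diff : ∀ t ∈ Ioo (0:ℝ) 1, DifferentiableAt ℝ u t)
    (hu_deriv_pos : ∀ t ∈ Ioo (0:ℝ) 1, 0 < deriv u t)
    (hu_nondec : ∃ t₁ ∈ Ioo (0:ℝ) 1,
      MonotoneOn (fun t => u t / (t * deriv u t)) (Ioo 0 t₁))
    (hu_sq : ∀ᶠ t in nhdsWithin 0 (Ioi 0),
      Real.log (1 / u (t ^ 2)) ≤ 2 ^ s * Real.log (1 / u t))
    (i₀ : ℕ) (hi₀ : 1 ≤ i₀) :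
    ∃ A₀ > (0:ℝ), ∀ A, 0 < A → A ≤ A₀ →
      ∀ χ : ℕ → ℝ, (∀ k, χ k = 0 ∨ χ k = 1) →
        (∀ᶠ i : ℕ in atTop,
          ∑ k ∈ Finset.Icc i₀ i, (1 - χ k) * ((2:ℝ) ^ (-(k:ℝ)) *
              deriv u ((2:ℝ) ^ (-(k:ℝ))) / u ((2:ℝ) ^ (-(k:ℝ))))
            ≤ A * Real.log (1 / u ((2:ℝ) ^ (-(i:ℝ))))) →
        (1 : ℝ) / 2 ≤
          Filter.liminf (fun i : ℕ => (∑ k ∈ Finset.Icc i₀ i, χ k) / i)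
            atTop :=
  stmt19_general n hn c hc s hs u hu_pos hu_inv i₀ hi₀
end
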